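/- arXiv:1607.02454 — 6 statements merged into one kernel-verified Lean document; each statement's English description precedes it below -/
import Mathlib

section
/- Let θ ∈ (0, π/2) and ω ∈ (0, 1/2] satisfy cos θ ≤ 2ω. Then for every u ∈ C_0^∞(Gui(θ); ℂ) one has ∫_{Gui(θ)} (|∂_r u|² + |∂_z u|² + (ω² − 1/4) r^{−2} |u|²) dr dz ≥ ∫_{Gui(θ)} |u|² dr dz. (Form-level statement of the absence of discrete spectrum below the essential spectrum threshold 1 for super-critical magnetic flux.) -/
open Real MeasureTheory

noncomputable section

/-- The meridian domain `Gui(θ)` of the conical layer. -/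
def Gui (θ : ℝ) : Set (ℝ × ℝ) :=
  {p | 0 < p.1 ∧ -π / Real.sin θ < p.2 ∧
    max 0 (p.2 * Real.tan θ) < p.1 ∧ p.1 < p.2 * Real.tan θ + π / Real.cos θ}

open intervalIntegral Set

lemma integral_eq_interval (f : ℝ → ℝ) (α β : ℝ) (hαβ : α ≤ β)
    (h : ∀ x ∉ Set.Ioo α β, f x = 0) : ∫ x, f x = ∫ x in α..β, f x := by
  rw [intervalIntegral.integral_of_le hαβ]
  exact (setIntegral_eq_integral_of_forall_compl_eq_zero
    (fun x hx => h x (fun hx' => hx (Set.Ioo_subset_Ioc_self hx')))).symm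

lemma continuous_of_zero_off {X : Type*} [TopologicalSpace X] (f : X → ℝ) (K U : Set X)
    (hK : IsClosed K) (hU : IsOpen U) (hKU : K ⊆ U) (hf : ContinuousOn f U)
    (h0 : ∀ x ∉ K, f x = 0) : Continuous f := by
  rw [continuous_iff_continuousAt]; intro x
  by_cases hx : x ∈ U
  · exact hf.continuousAt (hU.mem_nhds hx)
  · have hmem : Kᶜ ∈ nhds x := hK.isOpen_compl.mem_nhds (fun h => hx (hKU h))
    have hev : ∀ᶠ y in nhds x, f y = 0 := by filter_upwards [hmem] with y hy using h0 y hy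
    have hx0 : f x = 0 := h0 x (fun h => hx (hKU h))
    rw [ContinuousAt, hx0]
    exact Filter.Tendsto.congr' (by filter_upwards [hev] with y hy using hy.symm)
      tendsto_const_nhds

/-- Core 1D ground-state/Riccati inequality on an interval. -/
lemma core1D (g φ φ' : ℝ → ℝ) (α β : ℝ) (hαβ : α ≤ β)
    (hg : ContDiff ℝ (⊤ : ℕ∞) g) (hsupp : tsupport g ⊆ Set.Ioo α β)
    (hφ : ∀ x ∈ Set.uIcc α β, HasDerivAt φ (φ' x) x)
    (hφc : ContinuousOn φ (Set.uIcc α β)) (hφ'c : ContinuousOn φ' (Set.uIcc α β)) :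
    ∫ x in α..β, (-φ' x - φ x ^ 2) * g x ^ 2 ≤ ∫ x in α..β, (deriv g x) ^ 2 := by
  have hgc : Continuous g := hg.continuous
  have hg'c : Continuous (deriv g) := hg.continuous_deriv (by simp)
  have hgd : ∀ x, HasDerivAt g (deriv g x) x :=
    fun x => (hg.differentiable (by simp)).differentiableAt.hasDerivAt
  -- integration by parts : ∫ φ * (g^2)' = - ∫ φ' * g^2
  have hga : g α = 0 := image_eq_zero_of_notMem_tsupport (fun h => by
    exact absurd (hsupp h) (by simp))
  have hgb : g β = 0 := image_eq_zero_of_notMem_tsupport (fun h => by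
    exact absurd (hsupp h) (by simp))
  have ibp : ∫ x in α..β, φ x * (2 * g x * deriv g x)
      = - ∫ x in α..β, φ' x * g x ^ 2 := by
    have h := integral_mul_deriv_eq_deriv_mul (u := φ) (v := fun x => g x ^ 2)
      (u' := φ') (v' := fun x => 2 * g x * deriv g x) hφ
      (fun x _ => by
        simpa [mul_comm, mul_assoc, pow_two] using ((hgd x).fun_pow 2))
      (hφ'c.intervalIntegrable)
      (Continuous.intervalIntegrable (by continuity) _ _)
    rw [h]
    simp [hga, hgb]
  have expand : ∀ x, (deriv g x - φ x * g x) ^ 2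
      = (deriv g x) ^ 2 - φ x * (2 * g x * deriv g x) + φ x ^ 2 * g x ^ 2 := by
    intro x; ring
  have hint1 : IntervalIntegrable (fun x => (deriv g x)^2) volume α β :=
    Continuous.intervalIntegrable (by continuity) _ _
  have hint2 : IntervalIntegrable (fun x => φ x * (2 * g x * deriv g x)) volume α β :=
    (hφc.mul ((by continuity : Continuous fun x => 2 * g x * deriv g x).continuousOn)).intervalIntegrable
  have hint3 : IntervalIntegrable (fun x => φ x ^ 2 * g x ^ 2) volume α β :=
    ((hφc.pow 2).mul ((hgc.pow 2).continuousOn)).intervalIntegrable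
  have hint4 : IntervalIntegrable (fun x => φ' x * g x ^ 2) volume α β :=
    (hφ'c.mul ((hgc.pow 2).continuousOn)).intervalIntegrable
  have key : (0:ℝ) ≤ ∫ x in α..β, (deriv g x - φ x * g x) ^ 2 :=
    intervalIntegral.integral_nonneg hαβ (fun x _ => sq_nonneg _)
  rw [intervalIntegral.integral_congr (g := fun x => (deriv g x) ^ 2 - φ x * (2 * g x * deriv g x) + φ x ^ 2 * g x ^ 2) (fun x _ => expand x)] at key
  rw [intervalIntegral.integral_add (hint1.sub hint2) hint3, intervalIntegral.integral_sub hint1 hint2, ibp] at key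
  have hint4' : IntervalIntegrable (fun x => -(φ' x * g x ^ 2)) volume α β := hint4.neg
  have : ∫ x in α..β, (-φ' x - φ x ^ 2) * g x ^ 2
      = (∫ x in α..β, - (φ' x * g x ^ 2)) - ∫ x in α..β, φ x ^ 2 * g x ^ 2 := by
    rw [← intervalIntegral.integral_sub hint4' hint3]
    apply intervalIntegral.integral_congr
    intro x _; ring
  rw [this, intervalIntegral.integral_neg]
  linarith

/-- 1D Hardy inequality for real functions supported in `(c, ∞)`. -/
lemma hardy_real (g : ℝ → ℝ) (hg : ContDiff ℝ (⊤ : ℕ∞) g) (hcs : HasCompactSupport g)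
    (c : ℝ) (hsupp : tsupport g ⊆ Set.Ioi c) :
    (1/4 : ℝ) * ∫ x, g x ^ 2 / (x - c) ^ 2 ≤ ∫ x, (deriv g x) ^ 2 := by
  rcases (tsupport g).eq_empty_or_nonempty with hK | hK
  · have hg0 : g = fun _ => 0 := funext fun x =>
      image_eq_zero_of_notMem_tsupport (by simp [hK])
    rw [hg0]
    simp
  · set K := tsupport g with hKdef
    have hKc : IsCompact K := hcs
    have hm : sInf K ∈ K := hKc.sInf_mem hK
    have hM : sSup K ∈ K := hKc.sSup_mem hK
    set m := sInf K; set M := sSup K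
    have hcm : c < m := hsupp hm
    have hmM : m ≤ M := csInf_le_csSup hK hKc.bddBelow hKc.bddAbove
    set α := (c + m)/2 with hα
    set β := M + 1 with hβ
    have hαm : α < m := by simp only [hα]; linarith
    have hcα : c < α := by simp only [hα]; linarith
    have hαβ : α ≤ β := by linarith
    have hsub : tsupport g ⊆ Set.Ioo α β := fun x hx =>
      ⟨lt_of_lt_of_le hαm (csInf_le hKc.bddBelow hx),
       lt_of_le_of_lt (le_csSup hKc.bddAbove hx) (by linarith)⟩
    have hIcc : Set.uIcc α β = Set.Icc α β := Set.uIcc_of_le hαβ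
    have hne : ∀ x ∈ Set.uIcc α β, 2 * (x - c) ≠ 0 := by
      intro x hx
      rw [hIcc] at hx
      have : c < x := lt_of_lt_of_le hcα hx.1
      have : (0:ℝ) < 2 * (x - c) := by linarith
      exact ne_of_gt this
    have key := core1D g (fun x => (2 * (x - c))⁻¹) (fun x => -2 / (2 * (x - c)) ^ 2)
      α β hαβ hg hsub
      (fun x hx => by
        have h1 : HasDerivAt (fun x => 2 * (x - c)) 2 x := by
          simpa using ((hasDerivAt_id x).sub_const c).const_mul 2
        exact h1.inv (hne x hx))
      (ContinuousOn.inv₀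
        ((continuous_const.mul (continuous_id.sub continuous_const)).continuousOn) hne)
      (ContinuousOn.div continuous_const.continuousOn
        (((continuous_const.mul (continuous_id.sub continuous_const)).pow 2).continuousOn)
        (fun x hx => pow_ne_zero 2 (hne x hx)))
    have hcongr : ∫ x in α..β, (-(-2 / (2 * (x - c)) ^ 2) - ((2 * (x - c))⁻¹) ^ 2) * g x ^ 2
        = ∫ x in α..β, 1/4 * (g x ^ 2 / (x - c) ^ 2) := by
      apply intervalIntegral.integral_congr
      intro x hx
      have h2 : (2:ℝ) * (x - c) ≠ 0 := hne x hx
      have hxc : x - c ≠ 0 := by intro h; apply h2; rw [h]; ring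
      field_simp
      ring
    have hL : ∫ x, 1/4 * (g x ^ 2 / (x - c) ^ 2) = ∫ x in α..β, 1/4 * (g x ^ 2 / (x - c) ^ 2) :=
      integral_eq_interval _ α β hαβ (fun x hx => by
        have : g x = 0 := image_eq_zero_of_notMem_tsupport (fun h => hx (hsub h))
        simp [this])
    have hR : ∫ x, (deriv g x) ^ 2 = ∫ x in α..β, (deriv g x) ^ 2 :=
      integral_eq_interval _ α β hαβ (fun x hx => by
        have : deriv g x = 0 := by
          by_contra h
          exact hx (hsub (support_deriv_subset h))
        simp [this])
    calc (1/4 : ℝ) * ∫ x, g x ^ 2 / (x - c) ^ 2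
        = ∫ x, 1/4 * (g x ^ 2 / (x - c) ^ 2) := by rw [MeasureTheory.integral_const_mul]
      _ = ∫ x in α..β, 1/4 * (g x ^ 2 / (x - c) ^ 2) := hL
      _ ≤ ∫ x in α..β, (deriv g x) ^ 2 := by rw [← hcongr]; exact key
      _ = ∫ x, (deriv g x) ^ 2 := hR.symm

/-- 1D Poincaré inequality for real functions supported in `(0, π)`. -/
lemma poincare_real (g : ℝ → ℝ) (hg : ContDiff ℝ (⊤ : ℕ∞) g) (hcs : HasCompactSupport g)
    (hsupp : tsupport g ⊆ Set.Ioo 0 π) :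
    ∫ x, g x ^ 2 ≤ ∫ x, (deriv g x) ^ 2 := by
  rcases (tsupport g).eq_empty_or_nonempty with hK | hK
  · have hg0 : g = fun _ => 0 := funext fun x =>
      image_eq_zero_of_notMem_tsupport (by simp [hK])
    rw [hg0]; simp
  · set K := tsupport g with hKdef
    have hKc : IsCompact K := hcs
    have hm : sInf K ∈ K := hKc.sInf_mem hK
    have hM : sSup K ∈ K := hKc.sSup_mem hK
    set m := sInf K; set M := sSup K
    have hm0 : 0 < m := (hsupp hm).1
    have hMπ : M < π := (hsupp hM).2
    have hmM : m ≤ M := csInf_le_csSup hK hKc.bddBelow hKc.bddAbove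
    set α := m/2 with hα
    set β := (M + π)/2 with hβ
    have hαm : α < m := by simp only [hα]; linarith
    have h0α : 0 < α := by simp only [hα]; linarith
    have hβπ : β < π := by simp only [hβ]; linarith
    have hMβ : M < β := by simp only [hβ]; linarith
    have hαβ : α ≤ β := by linarith
    have hsub : tsupport g ⊆ Set.Ioo α β := fun x hx =>
      ⟨lt_of_lt_of_le hαm (csInf_le hKc.bddBelow hx),
       lt_of_le_of_lt (le_csSup hKc.bddAbove hx) hMβ⟩
    have hIcc : Set.uIcc α β = Set.Icc α β := Set.uIcc_of_le hαβ
    have hsin : ∀ x ∈ Set.uIcc α β, Real.sin x ≠ 0 := by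
      intro x hx
      rw [hIcc] at hx
      exact ne_of_gt (Real.sin_pos_of_pos_of_lt_pi (lt_of_lt_of_le h0α hx.1)
        (lt_of_le_of_lt hx.2 hβπ))
    have key := core1D g (fun x => Real.cos x / Real.sin x)
      (fun x => (-Real.sin x * Real.sin x - Real.cos x * Real.cos x) / Real.sin x ^ 2)
      α β hαβ hg hsub
      (fun x hx => (Real.hasDerivAt_cos x).div (Real.hasDerivAt_sin x) (hsin x hx))
      (ContinuousOn.div Real.continuous_cos.continuousOn Real.continuous_sin.continuousOn hsin)
      (ContinuousOn.div
        (((Real.continuous_sin.neg.mul Real.continuous_sin).sub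
          (Real.continuous_cos.mul Real.continuous_cos)).continuousOn)
        ((Real.continuous_sin.pow 2).continuousOn)
        (fun x hx => pow_ne_zero 2 (hsin x hx)))
    have hcongr : ∫ x in α..β,
        (-((-Real.sin x * Real.sin x - Real.cos x * Real.cos x) / Real.sin x ^ 2)
          - (Real.cos x / Real.sin x) ^ 2) * g x ^ 2
        = ∫ x in α..β, g x ^ 2 := by
      apply intervalIntegral.integral_congr
      intro x hx
      have hs := hsin x hx
      have hpyth : Real.sin x ^ 2 + Real.cos x ^ 2 = 1 := Real.sin_sq_add_cos_sq x
      field_simp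
      nlinarith [hpyth]
    have hL : ∫ x, g x ^ 2 = ∫ x in α..β, g x ^ 2 :=
      integral_eq_interval _ α β hαβ (fun x hx => by
        have : g x = 0 := image_eq_zero_of_notMem_tsupport (fun h => hx (hsub h))
        simp [this])
    have hR : ∫ x, (deriv g x) ^ 2 = ∫ x in α..β, (deriv g x) ^ 2 :=
      integral_eq_interval _ α β hαβ (fun x hx => by
        have : deriv g x = 0 := by
          by_contra h
          exact hx (hsub (support_deriv_subset h))
        simp [this])
    rw [hL, hR]
    rw [← hcongr]
    exact key

lemma norm_sq_complex (z : ℂ) : ‖z‖^2 = z.re^2 + z.im^2 := by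
  rw [Complex.sq_norm, Complex.normSq_apply]; ring

section parts
variable (g : ℝ → ℂ)

lemma re_contDiff (hg : ContDiff ℝ (⊤ : ℕ∞) g) : ContDiff ℝ (⊤ : ℕ∞) (fun x => (g x).re) := Complex.reCLM.contDiff.comp hg
lemma im_contDiff (hg : ContDiff ℝ (⊤ : ℕ∞) g) : ContDiff ℝ (⊤ : ℕ∞) (fun x => (g x).im) := Complex.imCLM.contDiff.comp hg

lemma re_supp : tsupport (fun x => (g x).re) ⊆ tsupport g :=
  closure_mono (fun x (hx : (g x).re ≠ 0) => show g x ≠ 0 from fun h0 => hx (by simp [h0]))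

lemma im_supp : tsupport (fun x => (g x).im) ⊆ tsupport g :=
  closure_mono (fun x (hx : (g x).im ≠ 0) => show g x ≠ 0 from fun h0 => hx (by simp [h0]))

lemma re_cs (hcs : HasCompactSupport g) : HasCompactSupport (fun x => (g x).re) :=
  IsCompact.of_isClosed_subset hcs isClosed_closure (re_supp g)

lemma im_cs (hcs : HasCompactSupport g) : HasCompactSupport (fun x => (g x).im) :=
  IsCompact.of_isClosed_subset hcs isClosed_closure (im_supp g)

lemma re_deriv (hg : ContDiff ℝ (⊤ : ℕ∞) g) (x : ℝ) : deriv (fun x => (g x).re) x = (deriv g x).re := by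
  have h : HasDerivAt (fun x => (g x).re) ((deriv g x).re) x :=
    Complex.reCLM.hasFDerivAt.comp_hasDerivAt x ((hg.differentiable (by simp) x).hasDerivAt)
  exact h.deriv

lemma im_deriv (hg : ContDiff ℝ (⊤ : ℕ∞) g) (x : ℝ) : deriv (fun x => (g x).im) x = (deriv g x).im := by
  have h : HasDerivAt (fun x => (g x).im) ((deriv g x).im) x :=
    Complex.imCLM.hasFDerivAt.comp_hasDerivAt x ((hg.differentiable (by simp) x).hasDerivAt)
  exact h.deriv
end parts

lemma cs_sq {f : ℝ → ℝ} (h : HasCompactSupport f) : HasCompactSupport (fun x => f x ^ 2) :=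
  h.mono' (fun x hx => subset_closure (show f x ≠ 0 from fun h0 => hx (by simp [h0])))

/-- 1D Poincaré inequality for complex functions supported in `(0, π)`. -/
lemma poincare_complex (g : ℝ → ℂ) (hg : ContDiff ℝ (⊤ : ℕ∞) g) (hcs : HasCompactSupport g)
    (hsupp : tsupport g ⊆ Set.Ioo 0 π) :
    ∫ x, ‖g x‖^2 ≤ ∫ x, ‖deriv g x‖^2 := by
  have hrC := re_contDiff g hg
  have hiC := im_contDiff g hg
  have hrcs := re_cs g hcs
  have hics := im_cs g hcs
  have hIr : Integrable (fun x => (g x).re ^ 2) :=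
    (hrC.continuous.pow 2).integrable_of_hasCompactSupport (cs_sq hrcs)
  have hIi : Integrable (fun x => (g x).im ^ 2) :=
    (hiC.continuous.pow 2).integrable_of_hasCompactSupport (cs_sq hics)
  have hgdC : Continuous (deriv g) := hg.continuous_deriv (by simp)
  have hIdr : Integrable (fun x => (deriv g x).re ^ 2) :=
    ((Complex.continuous_re.comp hgdC).pow 2).integrable_of_hasCompactSupport
      (hcs.mono' (fun x hx => support_deriv_subset
        (show deriv g x ≠ 0 from fun h0 => hx (by simp [h0]))))
  have hIdi : Integrable (fun x => (deriv g x).im ^ 2) :=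
    ((Complex.continuous_im.comp hgdC).pow 2).integrable_of_hasCompactSupport
      (hcs.mono' (fun x hx => support_deriv_subset
        (show deriv g x ≠ 0 from fun h0 => hx (by simp [h0]))))
  have e1 : ∫ x, ‖g x‖^2 = (∫ x, (g x).re ^ 2) + ∫ x, (g x).im ^ 2 := by
    rw [← integral_add hIr hIi]
    simp only [norm_sq_complex]
  have e2 : ∫ x, ‖deriv g x‖^2 = (∫ x, (deriv g x).re ^ 2) + ∫ x, (deriv g x).im ^ 2 := by
    rw [← integral_add hIdr hIdi]
    simp only [norm_sq_complex]
  have h1 : ∫ x, (g x).re ^ 2 ≤ ∫ x, (deriv g x).re ^ 2 := by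
    have := poincare_real (fun x => (g x).re) hrC hrcs ((re_supp g).trans hsupp)
    calc ∫ x, (g x).re ^ 2 ≤ ∫ x, (deriv (fun x => (g x).re) x) ^ 2 := this
      _ = ∫ x, (deriv g x).re ^ 2 := by
          congr 1; funext x; rw [re_deriv g hg x]
  have h2 : ∫ x, (g x).im ^ 2 ≤ ∫ x, (deriv g x).im ^ 2 := by
    have := poincare_real (fun x => (g x).im) hiC hics ((im_supp g).trans hsupp)
    calc ∫ x, (g x).im ^ 2 ≤ ∫ x, (deriv (fun x => (g x).im) x) ^ 2 := this
      _ = ∫ x, (deriv g x).im ^ 2 := by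
          congr 1; funext x; rw [im_deriv g hg x]
  rw [e1, e2]
  exact add_le_add h1 h2

/-- 1D Hardy inequality for complex functions supported in `(c, ∞)`. -/
lemma hardy_complex (g : ℝ → ℂ) (hg : ContDiff ℝ (⊤ : ℕ∞) g) (hcs : HasCompactSupport g)
    (c : ℝ) (hsupp : tsupport g ⊆ Set.Ioi c) :
    (1/4 : ℝ) * ∫ x, ‖g x‖^2 / (x - c)^2 ≤ ∫ x, ‖deriv g x‖^2 := by
  have hrC := re_contDiff g hg
  have hiC := im_contDiff g hg
  have hrcs := re_cs g hcs
  have hics := im_cs g hcs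
  have hIr : Integrable (fun x => (g x).re ^ 2 / (x - c) ^ 2) := by
    apply Continuous.integrable_of_hasCompactSupport
    · apply continuous_of_zero_off _ (tsupport g) (Set.Ioi c) isClosed_closure isOpen_Ioi hsupp
      · exact ContinuousOn.div ((hrC.continuous.pow 2).continuousOn)
          (((continuous_id.sub continuous_const).pow 2).continuousOn)
          (fun x hx => pow_ne_zero 2 (sub_ne_zero_of_ne (ne_of_gt hx)))
      · intro x hx
        have : (g x) = 0 := image_eq_zero_of_notMem_tsupport hx
        simp [this]
    · apply hcs.mono'
      intro x hx
      apply subset_closure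
      show g x ≠ 0
      intro h0; exact hx (by simp [h0])
  have hIi : Integrable (fun x => (g x).im ^ 2 / (x - c) ^ 2) := by
    apply Continuous.integrable_of_hasCompactSupport
    · apply continuous_of_zero_off _ (tsupport g) (Set.Ioi c) isClosed_closure isOpen_Ioi hsupp
      · exact ContinuousOn.div ((hiC.continuous.pow 2).continuousOn)
          (((continuous_id.sub continuous_const).pow 2).continuousOn)
          (fun x hx => pow_ne_zero 2 (sub_ne_zero_of_ne (ne_of_gt hx)))
      · intro x hx
        have : (g x) = 0 := image_eq_zero_of_notMem_tsupport hx
        simp [this]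
    · apply hcs.mono'
      intro x hx
      apply subset_closure
      show g x ≠ 0
      intro h0; exact hx (by simp [h0])
  have hgdC : Continuous (deriv g) := hg.continuous_deriv (by simp)
  have hIdr : Integrable (fun x => (deriv g x).re ^ 2) :=
    ((Complex.continuous_re.comp hgdC).pow 2).integrable_of_hasCompactSupport
      (hcs.mono' (fun x hx => support_deriv_subset
        (show deriv g x ≠ 0 from fun h0 => hx (by simp [h0]))))
  have hIdi : Integrable (fun x => (deriv g x).im ^ 2) :=
    ((Complex.continuous_im.comp hgdC).pow 2).integrable_of_hasCompactSupport
      (hcs.mono' (fun x hx => support_deriv_subset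
        (show deriv g x ≠ 0 from fun h0 => hx (by simp [h0]))))
  have e1 : ∫ x, ‖g x‖^2 / (x - c)^2
      = (∫ x, (g x).re ^ 2 / (x - c)^2) + ∫ x, (g x).im ^ 2 / (x - c)^2 := by
    rw [← integral_add hIr hIi]
    congr 1; funext x
    rw [norm_sq_complex, add_div]
  have e2 : ∫ x, ‖deriv g x‖^2 = (∫ x, (deriv g x).re ^ 2) + ∫ x, (deriv g x).im ^ 2 := by
    rw [← integral_add hIdr hIdi]
    simp only [norm_sq_complex]
  have h1 : (1/4 : ℝ) * ∫ x, (g x).re ^ 2 / (x - c)^2 ≤ ∫ x, (deriv g x).re ^ 2 := by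
    have := hardy_real (fun x => (g x).re) hrC hrcs c ((re_supp g).trans hsupp)
    calc (1/4 : ℝ) * ∫ x, (g x).re ^ 2 / (x - c)^2
        ≤ ∫ x, (deriv (fun x => (g x).re) x) ^ 2 := this
      _ = ∫ x, (deriv g x).re ^ 2 := by
          congr 1; funext x; rw [re_deriv g hg x]
  have h2 : (1/4 : ℝ) * ∫ x, (g x).im ^ 2 / (x - c)^2 ≤ ∫ x, (deriv g x).im ^ 2 := by
    have := hardy_real (fun x => (g x).im) hiC hics c ((im_supp g).trans hsupp)
    calc (1/4 : ℝ) * ∫ x, (g x).im ^ 2 / (x - c)^2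
        ≤ ∫ x, (deriv (fun x => (g x).im) x) ^ 2 := this
      _ = ∫ x, (deriv g x).im ^ 2 := by
          congr 1; funext x; rw [im_deriv g hg x]
  rw [e1, e2, mul_add]
  exact add_le_add h1 h2

section secs
variable (v : ℝ × ℝ → ℂ) (hv : ContDiff ℝ (⊤ : ℕ∞) v) (hcs : HasCompactSupport v)

lemma secY_contDiff (hv : ContDiff ℝ (⊤ : ℕ∞) v) (x : ℝ) :
    ContDiff ℝ (⊤ : ℕ∞) (fun y => v (x, y)) := hv.comp (contDiff_const.prodMk contDiff_id)

lemma secY_supp (x : ℝ) : tsupport (fun y => v (x, y)) ⊆ {y | (x, y) ∈ tsupport v} :=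
  closure_minimal (fun y (hy : v (x,y) ≠ 0) => subset_closure hy)
    (isClosed_closure.preimage (Continuous.prodMk_right x))

lemma secY_cs (hcs : HasCompactSupport v) (x : ℝ) :
    HasCompactSupport (fun y => v (x, y)) :=
  IsCompact.of_isClosed_subset (hcs.image continuous_snd) isClosed_closure
    (closure_minimal (fun y (hy : v (x,y) ≠ 0) => ⟨(x,y), subset_closure hy, rfl⟩)
      (hcs.image continuous_snd).isClosed)

lemma secY_deriv (hv : ContDiff ℝ (⊤ : ℕ∞) v) (x y : ℝ) :
    deriv (fun y => v (x, y)) y = fderiv ℝ v (x, y) (0, 1) := by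
  have h : HasDerivAt (fun y => v (x, y)) (fderiv ℝ v (x, y) (0, 1)) y :=
    ((hv.differentiable (by simp) (x,y)).hasFDerivAt).comp_hasDerivAt y
      ((hasDerivAt_const y x).prodMk (hasDerivAt_id y))
  exact h.deriv

lemma secX_contDiff (hv : ContDiff ℝ (⊤ : ℕ∞) v) (y : ℝ) :
    ContDiff ℝ (⊤ : ℕ∞) (fun x => v (x, y)) := hv.comp (contDiff_id.prodMk contDiff_const)

lemma secX_supp (y : ℝ) : tsupport (fun x => v (x, y)) ⊆ {x | (x, y) ∈ tsupport v} :=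
  closure_minimal (fun x (hx : v (x,y) ≠ 0) => subset_closure hx)
    (isClosed_closure.preimage (continuous_id.prodMk continuous_const))

lemma secX_cs (hcs : HasCompactSupport v) (y : ℝ) :
    HasCompactSupport (fun x => v (x, y)) :=
  IsCompact.of_isClosed_subset (hcs.image continuous_fst) isClosed_closure
    (closure_minimal (fun x (hx : v (x,y) ≠ 0) => ⟨(x,y), subset_closure hx, rfl⟩)
      (hcs.image continuous_fst).isClosed)

lemma secX_deriv (hv : ContDiff ℝ (⊤ : ℕ∞) v) (x y : ℝ) :
    deriv (fun x => v (x, y)) x = fderiv ℝ v (x, y) (1, 0) := by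
  have h : HasDerivAt (fun x => v (x, y)) (fderiv ℝ v (x, y) (1, 0)) x :=
    ((hv.differentiable (by simp) (x,y)).hasFDerivAt).comp_hasDerivAt x
      ((hasDerivAt_id x).prodMk (hasDerivAt_const x y))
  exact h.deriv
end secs

lemma fderiv_apply_continuous (v : ℝ × ℝ → ℂ) (hv : ContDiff ℝ (⊤ : ℕ∞) v) (w : ℝ × ℝ) :
    Continuous (fun p => fderiv ℝ v p w) :=
  (hv.continuous_fderiv (by simp)).clm_apply continuous_const

lemma fderiv_apply_cs (v : ℝ × ℝ → ℂ) (hcs : HasCompactSupport v) (w : ℝ × ℝ) :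
    HasCompactSupport (fun p => ‖fderiv ℝ v p w‖ ^ 2) :=
  hcs.mono' (fun p hp => support_fderiv_subset ℝ
    (show fderiv ℝ v p ≠ 0 from fun h0 => hp (by simp [h0])))

/-- Part A : transverse Poincaré inequality. -/
lemma partA (v : ℝ × ℝ → ℂ) (hv : ContDiff ℝ (⊤ : ℕ∞) v) (hcs : HasCompactSupport v)
    (hsupp : tsupport v ⊆ {p : ℝ × ℝ | p.2 ∈ Set.Ioo 0 π}) :
    0 ≤ ∫ p : ℝ × ℝ, (‖fderiv ℝ v p (0, 1)‖ ^ 2 - ‖v p‖ ^ 2) := by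
  have hId : Integrable (fun p : ℝ × ℝ => ‖fderiv ℝ v p (0,1)‖ ^ 2) :=
    (((fderiv_apply_continuous v hv _).norm).pow 2).integrable_of_hasCompactSupport
      (fderiv_apply_cs v hcs _)
  have hIv : Integrable (fun p : ℝ × ℝ => ‖v p‖ ^ 2) :=
    ((hv.continuous.norm).pow 2).integrable_of_hasCompactSupport
      (hcs.mono' (fun p hp => subset_closure (show v p ≠ 0 from fun h0 => hp (by simp [h0]))))
  have hI : Integrable (fun p : ℝ × ℝ => ‖fderiv ℝ v p (0,1)‖ ^ 2 - ‖v p‖ ^ 2) := hId.sub hIv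
  rw [MeasureTheory.Measure.volume_eq_prod] at hI ⊢
  rw [MeasureTheory.integral_prod _ hI]
  apply MeasureTheory.integral_nonneg
  intro x
  show (0:ℝ) ≤ ∫ y : ℝ, (‖fderiv ℝ v (x, y) (0,1)‖ ^ 2 - ‖v (x, y)‖ ^ 2)
  have hg : ContDiff ℝ (⊤ : ℕ∞) (fun y => v (x, y)) := secY_contDiff v hv x
  have hgcs : HasCompactSupport (fun y => v (x, y)) := secY_cs v hcs x
  have hgsupp : tsupport (fun y => v (x, y)) ⊆ Set.Ioo 0 π :=
    (secY_supp v x).trans (fun y hy => hsupp hy)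
  have key := poincare_complex _ hg hgcs hgsupp
  have hI1 : Integrable (fun y => ‖v (x, y)‖ ^ 2) :=
    ((hg.continuous.norm).pow 2).integrable_of_hasCompactSupport
      (hgcs.mono' (fun y hy => subset_closure
        (show v (x, y) ≠ 0 from fun h0 => hy (by simp [h0]))))
  have hI2 : Integrable (fun y => ‖fderiv ℝ v (x, y) (0,1)‖ ^ 2) := by
    have : Continuous (fun y => fderiv ℝ v (x, y) (0,1)) :=
      (fderiv_apply_continuous v hv (0,1)).comp (Continuous.prodMk_right x)
    exact ((this.norm).pow 2).integrable_of_hasCompactSupport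
      (IsCompact.of_isClosed_subset ((fderiv_apply_cs v hcs (0,1)).image continuous_snd)
        isClosed_closure
        (closure_minimal (fun y hy => ⟨(x,y), subset_closure hy, rfl⟩)
          ((fderiv_apply_cs v hcs (0,1)).image continuous_snd).isClosed))
  rw [integral_sub hI2 hI1]
  have : ∫ y, ‖deriv (fun y => v (x, y)) y‖ ^ 2 = ∫ y, ‖fderiv ℝ v (x, y) (0,1)‖ ^ 2 := by
    congr 1; funext y; rw [secY_deriv v hv x y]
  linarith [this ▸ key]

/-- Part B : longitudinal Hardy inequality. -/
lemma partB (v : ℝ × ℝ → ℂ) (hv : ContDiff ℝ (⊤ : ℕ∞) v) (hcs : HasCompactSupport v)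
    (s c k : ℝ) (hs : 0 < s) (hk : -(s^2)/4 ≤ k) (hk0 : k ≤ 0)
    (hsupp : tsupport v ⊆ {p : ℝ × ℝ | 0 < s * p.1 + c * p.2}) :
    0 ≤ ∫ p : ℝ × ℝ, (‖fderiv ℝ v p (1, 0)‖ ^ 2 + k / (s * p.1 + c * p.2) ^ 2 * ‖v p‖ ^ 2) := by
  have hId : Integrable (fun p : ℝ × ℝ => ‖fderiv ℝ v p (1,0)‖ ^ 2) :=
    (((fderiv_apply_continuous v hv _).norm).pow 2).integrable_of_hasCompactSupport
      (fderiv_apply_cs v hcs _)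
  have hUopen : IsOpen {p : ℝ × ℝ | 0 < s * p.1 + c * p.2} :=
    isOpen_lt continuous_const ((continuous_const.mul continuous_fst).add
      (continuous_const.mul continuous_snd))
  have hpotC : Continuous (fun p : ℝ × ℝ => k / (s * p.1 + c * p.2) ^ 2 * ‖v p‖ ^ 2) := by
    apply continuous_of_zero_off _ (tsupport v) _ isClosed_closure hUopen hsupp
    · exact ContinuousOn.mul
        (ContinuousOn.div continuousOn_const
          (Continuous.continuousOn (by fun_prop))
          (fun p hp => pow_ne_zero 2 (ne_of_gt (hp : 0 < s * p.1 + c * p.2))))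
        ((hv.continuous.norm.pow 2).continuousOn)
    · intro p hp
      have : v p = 0 := image_eq_zero_of_notMem_tsupport hp
      simp [this]
  have hpotcs : HasCompactSupport (fun p : ℝ × ℝ => k / (s * p.1 + c * p.2) ^ 2 * ‖v p‖ ^ 2) :=
    hcs.mono' (fun p hp => subset_closure (show v p ≠ 0 from fun h0 => hp (by simp [h0])))
  have hIpot : Integrable (fun p : ℝ × ℝ => k / (s * p.1 + c * p.2) ^ 2 * ‖v p‖ ^ 2) :=
    hpotC.integrable_of_hasCompactSupport hpotcs
  have hI : Integrable (fun p : ℝ × ℝ =>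
      ‖fderiv ℝ v p (1,0)‖ ^ 2 + k / (s * p.1 + c * p.2) ^ 2 * ‖v p‖ ^ 2) := hId.add hIpot
  rw [MeasureTheory.Measure.volume_eq_prod] at hI ⊢
  rw [MeasureTheory.integral_prod_symm _ hI]
  apply MeasureTheory.integral_nonneg
  intro y
  show (0:ℝ) ≤ ∫ x : ℝ, (‖fderiv ℝ v (x, y) (1,0)‖ ^ 2 + k / (s * x + c * y) ^ 2 * ‖v (x, y)‖ ^ 2)
  set c' : ℝ := -(c * y) / s with hc'
  have hg : ContDiff ℝ (⊤ : ℕ∞) (fun x => v (x, y)) := secX_contDiff v hv y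
  have hgcs : HasCompactSupport (fun x => v (x, y)) := secX_cs v hcs y
  have hgsupp : tsupport (fun x => v (x, y)) ⊆ Set.Ioi c' := by
    refine (secX_supp v y).trans (fun x hx => ?_)
    have h1 : 0 < s * x + c * y := hsupp hx
    show c' < x
    rw [hc', div_lt_iff₀ hs]
    nlinarith
  have key := hardy_complex _ hg hgcs c' hgsupp
  -- pointwise identity for the potential
  have hpt : ∀ x : ℝ, k / (s * x + c * y) ^ 2 * ‖v (x, y)‖ ^ 2
      = (k / s ^ 2) * (‖v (x, y)‖ ^ 2 / (x - c') ^ 2) := by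
    intro x
    have h1 : s * (x - c') = s * x + c * y := by
      rw [hc']; field_simp; ring
    have hsq : (s * x + c * y) ^ 2 = s ^ 2 * (x - c') ^ 2 := by
      rw [← h1]; ring
    rw [hsq, ← div_div, div_mul_eq_mul_div, mul_div_assoc]
  have hI2 : Integrable (fun x => ‖fderiv ℝ v (x, y) (1,0)‖ ^ 2) := by
    have hco : Continuous (fun x : ℝ => (x, y)) := continuous_id.prodMk continuous_const
    have : Continuous (fun x => fderiv ℝ v (x, y) (1,0)) :=
      (fderiv_apply_continuous v hv (1,0)).comp hco
    exact ((this.norm).pow 2).integrable_of_hasCompactSupport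
      (IsCompact.of_isClosed_subset ((fderiv_apply_cs v hcs (1,0)).image continuous_fst)
        isClosed_closure
        (closure_minimal (fun x hx => ⟨(x,y), subset_closure hx, rfl⟩)
          ((fderiv_apply_cs v hcs (1,0)).image continuous_fst).isClosed))
  have hI3 : Integrable (fun x => ‖v (x, y)‖ ^ 2 / (x - c') ^ 2) := by
    apply Continuous.integrable_of_hasCompactSupport
    · apply continuous_of_zero_off _ (tsupport (fun x => v (x, y))) (Set.Ioi c')
        isClosed_closure isOpen_Ioi hgsupp
      · exact ContinuousOn.div ((hg.continuous.norm.pow 2).continuousOn)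
          (((continuous_id.sub continuous_const).pow 2).continuousOn)
          (fun x hx => pow_ne_zero 2 (sub_ne_zero_of_ne (ne_of_gt hx)))
      · intro x hx
        have : v (x, y) = 0 := image_eq_zero_of_notMem_tsupport (f := fun x => v (x, y)) hx
        simp [this]
    · exact hgcs.mono' (fun x hx => subset_closure
        (show v (x, y) ≠ 0 from fun h0 => hx (by simp [h0])))
  have split : ∫ x : ℝ, (‖fderiv ℝ v (x, y) (1,0)‖ ^ 2 + k / (s * x + c * y) ^ 2 * ‖v (x, y)‖ ^ 2)
      = (∫ x, ‖fderiv ℝ v (x, y) (1,0)‖ ^ 2)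
        + (k / s ^ 2) * ∫ x, ‖v (x, y)‖ ^ 2 / (x - c') ^ 2 := by
    rw [← MeasureTheory.integral_const_mul, ← MeasureTheory.integral_add hI2 (hI3.const_mul _)]
    congr 1; funext x; rw [hpt x]
  rw [split]
  have hder : ∫ x, ‖deriv (fun x => v (x, y)) x‖ ^ 2 = ∫ x, ‖fderiv ℝ v (x, y) (1,0)‖ ^ 2 := by
    congr 1; funext x; rw [secX_deriv v hv x y]
  have hratio_nonneg : 0 ≤ ∫ x, ‖v (x, y)‖ ^ 2 / (x - c') ^ 2 :=
    MeasureTheory.integral_nonneg (fun x => by positivity)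
  have hks : -(1/4 : ℝ) ≤ k / s ^ 2 := by
    rw [neg_le, ← neg_div]
    rw [div_le_iff₀ (by positivity : (0:ℝ) < s ^ 2)]
    nlinarith
  have h1 : (k / s ^ 2) * ∫ x, ‖v (x, y)‖ ^ 2 / (x - c') ^ 2
      ≥ -(1/4 : ℝ) * ∫ x, ‖v (x, y)‖ ^ 2 / (x - c') ^ 2 :=
    mul_le_mul_of_nonneg_right hks hratio_nonneg
  have h2 : (1/4 : ℝ) * ∫ x, ‖v (x, y)‖ ^ 2 / (x - c') ^ 2
      ≤ ∫ x, ‖fderiv ℝ v (x, y) (1,0)‖ ^ 2 := by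
    rw [← hder]; exact key
  linarith

/-- The rotation `(x, y) ↦ (s x + c y, c x - s y)` as a linear map. -/
def Rmap (s c : ℝ) : (ℝ × ℝ) →ₗ[ℝ] (ℝ × ℝ) where
  toFun p := (s * p.1 + c * p.2, c * p.1 - s * p.2)
  map_add' p q := by ext <;> simp <;> ring
  map_smul' a p := by ext <;> simp <;> ring

lemma Rmap_det (s c : ℝ) : LinearMap.det (Rmap s c) = -(s^2 + c^2) := by
  rw [← LinearMap.det_toMatrix (Module.Basis.finTwoProd ℝ), Matrix.det_fin_two]
  simp [LinearMap.toMatrix_apply, Rmap, Module.Basis.finTwoProd]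
  ring

lemma Rmap_involutive (s c : ℝ) (h : s^2 + c^2 = 1) (p : ℝ × ℝ) :
    Rmap s c (Rmap s c p) = p := by
  ext
  · show s * (s * p.1 + c * p.2) + c * (c * p.1 - s * p.2) = p.1
    linear_combination p.1 * h
  · show c * (s * p.1 + c * p.2) - s * (c * p.1 - s * p.2) = p.2
    linear_combination p.2 * h

/-- The rotation as a measurable equivalence. -/
def Rhomeo (s c : ℝ) (h : s^2 + c^2 = 1) : ℝ × ℝ ≃ₜ ℝ × ℝ where
  toFun := Rmap s c
  invFun := Rmap s c
  left_inv := Rmap_involutive s c h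
  right_inv := Rmap_involutive s c h
  continuous_toFun := by
    show Continuous (fun p : ℝ × ℝ => (s * p.1 + c * p.2, c * p.1 - s * p.2))
    fun_prop
  continuous_invFun := by
    show Continuous (fun p : ℝ × ℝ => (s * p.1 + c * p.2, c * p.1 - s * p.2))
    fun_prop

lemma Rmap_measurePreserving (s c : ℝ) (h : s^2 + c^2 = 1) :
    MeasurePreserving (Rmap s c) (volume : Measure (ℝ × ℝ)) volume := by
  constructor
  · exact (Rhomeo s c h).continuous.measurable
  · have hdet : LinearMap.det (Rmap s c) ≠ 0 := by
      rw [Rmap_det, h]; norm_num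
    rw [Measure.map_linearMap_addHaar_eq_smul_addHaar volume hdet, Rmap_det, h]
    norm_num

lemma Rmap_integral_comp (s c : ℝ) (h : s^2 + c^2 = 1) (G : ℝ × ℝ → ℝ) :
    ∫ p, G (Rmap s c p) = ∫ p, G p :=
  (Rmap_measurePreserving s c h).integral_comp (Rhomeo s c h).measurableEmbedding G

lemma norm_sq_complex' (z : ℂ) : ‖z‖^2 = z.re^2 + z.im^2 := by
  rw [Complex.sq_norm, Complex.normSq_apply]; ring

/-- rotation invariance of the Dirichlet integrand. -/
lemma rot_identity (L : ℝ × ℝ →L[ℝ] ℂ) (s c : ℝ) (h : s^2 + c^2 = 1) :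
    ‖L (1, 0)‖^2 + ‖L (0, 1)‖^2 = ‖L (s, c)‖^2 + ‖L (c, -s)‖^2 := by
  have hz : ∀ (x y : ℝ) (a b : ℂ), ‖x • a + y • b‖^2
      = x^2 * ‖a‖^2 + 2*x*y*(a.re * b.re + a.im * b.im) + y^2 * ‖b‖^2 := by
    intro x y a b
    simp only [norm_sq_complex', Complex.add_re, Complex.add_im, Complex.real_smul,
      Complex.mul_re, Complex.mul_im, Complex.ofReal_re, Complex.ofReal_im]
    ring
  have e1 : L (s, c) = s • L (1, 0) + c • L (0, 1) := by
    rw [← L.map_smul, ← L.map_smul, ← L.map_add]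
    congr 1
    simp [Prod.ext_iff]
  have e2 : L (c, -s) = c • L (1, 0) + (-s) • L (0, 1) := by
    rw [← L.map_smul, ← L.map_smul, ← L.map_add]
    congr 1
    simp [Prod.ext_iff]
  rw [e1, e2, hz, hz]
  linear_combination (-(‖L ((1:ℝ), (0:ℝ))‖^2 + ‖L ((0:ℝ), (1:ℝ))‖^2)) * h

/-- chain rule for composition with the rotation. -/
lemma fderiv_comp_Rmap (u : ℝ × ℝ → ℂ) (hu : ContDiff ℝ (⊤ : ℕ∞) u) (s c : ℝ) (p w : ℝ × ℝ) :
    fderiv ℝ (fun q => u (Rmap s c q)) p w = fderiv ℝ u (Rmap s c p) (Rmap s c w) := by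
  have hR : HasFDerivAt (Rmap s c) ((Rmap s c).toContinuousLinearMap) p :=
    (Rmap s c).toContinuousLinearMap.hasFDerivAt
  have h2 : HasFDerivAt (fun q => u (Rmap s c q))
      ((fderiv ℝ u (Rmap s c p)).comp (Rmap s c).toContinuousLinearMap) p :=
    ((hu.differentiable (by simp) (Rmap s c p)).hasFDerivAt).comp p hR
  rw [h2.fderiv]
  rfl

/-- The meridian domain lies in the strip `0 < c r - s z < π`. -/
lemma Gui_subset_strip (θ : ℝ) (hθ : θ ∈ Set.Ioo 0 (π/2)) :
    Gui θ ⊆ {q : ℝ × ℝ | 0 < Real.cos θ * q.1 - Real.sin θ * q.2 ∧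
        Real.cos θ * q.1 - Real.sin θ * q.2 < π} := by
  rintro ⟨r, z⟩ ⟨hr, hz, hmax, hup⟩
  have hs : 0 < Real.sin θ := Real.sin_pos_of_pos_of_lt_pi hθ.1 (by linarith [hθ.2, Real.pi_pos])
  have hc : 0 < Real.cos θ := Real.cos_pos_of_mem_Ioo ⟨by linarith [hθ.1, Real.pi_pos], hθ.2⟩
  have htan : Real.tan θ = Real.sin θ / Real.cos θ := Real.tan_eq_sin_div_cos θ
  constructor
  · show 0 < Real.cos θ * r - Real.sin θ * z
    rcases le_or_gt z 0 with hz0 | hz0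
    · nlinarith
    · have h1 : z * Real.tan θ < r := lt_of_le_of_lt (le_max_right _ _) hmax
      rw [htan] at h1
      have h3 := mul_lt_mul_of_pos_right h1 hc
      rw [mul_assoc, div_mul_cancel₀ _ (ne_of_gt hc)] at h3
      nlinarith
  · show Real.cos θ * r - Real.sin θ * z < π
    rw [htan] at hup
    have h2 : r * Real.cos θ < z * Real.sin θ + π := by
      have h3 := mul_lt_mul_of_pos_right hup hc
      rw [add_mul, mul_assoc, div_mul_cancel₀ _ (ne_of_gt hc),
        div_mul_cancel₀ _ (ne_of_gt hc)] at h3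
      exact h3
    nlinarith


lemma Rmap_apply (s c : ℝ) (p : ℝ × ℝ) :
    Rmap s c p = (s * p.1 + c * p.2, c * p.1 - s * p.2) := rfl

lemma Rhomeo_coe (s c : ℝ) (h : s^2 + c^2 = 1) : ⇑(Rhomeo s c h) = ⇑(Rmap s c) := rfl

/-- For super-critical flux `cos θ ≤ 2ω` the quadratic form of the axisymmetric
fiber is bounded below by the essential spectrum threshold 1. -/
theorem no_discrete_spectrum_supercritical (θ ω : ℝ)
    (hθ : θ ∈ Set.Ioo 0 (π / 2)) (hω : ω ∈ Set.Ioc 0 (1 / 2))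
    (hcrit : Real.cos θ ≤ 2 * ω) :
    ∀ u : ℝ × ℝ → ℂ,
      ContDiff ℝ (⊤ : ℕ∞) u → HasCompactSupport u → tsupport u ⊆ Gui θ →
      ∫ p in Gui θ, (‖fderiv ℝ u p (1, 0)‖ ^ 2 + ‖fderiv ℝ u p (0, 1)‖ ^ 2
          + (ω ^ 2 - 1 / 4) / p.1 ^ 2 * ‖u p‖ ^ 2)
      ≥ ∫ p in Gui θ, ‖u p‖ ^ 2 := by
  intro u hu hcs hsupp
  obtain ⟨hθ1, hθ2⟩ := hθ
  have hπ : 0 < π := Real.pi_pos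
  have hs : 0 < Real.sin θ := Real.sin_pos_of_pos_of_lt_pi hθ1 (by linarith)
  have hc : 0 < Real.cos θ := Real.cos_pos_of_mem_Ioo ⟨by linarith, hθ2⟩
  have hsc : Real.sin θ ^ 2 + Real.cos θ ^ 2 = 1 := Real.sin_sq_add_cos_sq θ
  set s := Real.sin θ
  set c := Real.cos θ
  set k : ℝ := ω ^ 2 - 1 / 4 with hk
  have hk0 : k ≤ 0 := by
    have := hω.2
    rw [hk]; nlinarith [hω.1]
  have hks : -(s^2)/4 ≤ k := by
    rw [hk]; nlinarith [hω.1, hcrit, hc]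
  -- the rotated function
  set v : ℝ × ℝ → ℂ := fun p => u (Rmap s c p) with hvdef
  have hRcont : Continuous (⇑(Rmap s c)) := by
    rw [← Rhomeo_coe s c hsc]; exact (Rhomeo s c hsc).continuous
  have hvC : ContDiff ℝ (⊤ : ℕ∞) v := hu.comp (by
    have : ⇑(Rmap s c) = fun p : ℝ × ℝ => (s * p.1 + c * p.2, c * p.1 - s * p.2) :=
      funext (Rmap_apply s c)
    rw [this]
    fun_prop)
  have hvsupp : tsupport v ⊆ (Rmap s c) ⁻¹' (tsupport u) :=
    closure_minimal (fun p (hp : v p ≠ 0) => subset_closure hp)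
      (isClosed_closure.preimage hRcont)
  have hvcs : HasCompactSupport v := by
    apply IsCompact.of_isClosed_subset _ isClosed_closure hvsupp
    rw [← Rhomeo_coe s c hsc]
    exact (Rhomeo s c hsc).isCompact_preimage.mpr hcs
  have hsuppB : tsupport v ⊆ {p : ℝ × ℝ | 0 < s * p.1 + c * p.2} := by
    intro p hp
    have hG : Rmap s c p ∈ Gui θ := hsupp (hvsupp hp)
    have h1 : 0 < (Rmap s c p).1 := hG.1
    rw [Rmap_apply] at h1
    exact h1
  have hsuppA : tsupport v ⊆ {p : ℝ × ℝ | p.2 ∈ Set.Ioo 0 π} := by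
    intro p hp
    have hG : Rmap s c p ∈ Gui θ := hsupp (hvsupp hp)
    have hst := Gui_subset_strip θ ⟨hθ1, hθ2⟩ hG
    have hp2 : c * (Rmap s c p).1 - s * (Rmap s c p).2 = p.2 := by
      have h := Rmap_involutive s c hsc p
      rw [Rmap_apply s c (Rmap s c p)] at h
      have := congrArg Prod.snd h
      simpa using this
    exact ⟨by rw [← hp2]; exact hst.1, by rw [← hp2]; exact hst.2⟩
  -- integrability on the u side
  have hIu : Integrable (fun p : ℝ × ℝ => ‖u p‖ ^ 2) :=
    ((hu.continuous.norm).pow 2).integrable_of_hasCompactSupport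
      (hcs.mono' (fun p hp => subset_closure (show u p ≠ 0 from fun h0 => hp (by simp [h0]))))
  have hId1 : Integrable (fun p : ℝ × ℝ => ‖fderiv ℝ u p (1, 0)‖ ^ 2) :=
    (((fderiv_apply_continuous u hu _).norm).pow 2).integrable_of_hasCompactSupport
      (fderiv_apply_cs u hcs _)
  have hId2 : Integrable (fun p : ℝ × ℝ => ‖fderiv ℝ u p (0, 1)‖ ^ 2) :=
    (((fderiv_apply_continuous u hu _).norm).pow 2).integrable_of_hasCompactSupport
      (fderiv_apply_cs u hcs _)
  have hUr : IsOpen {p : ℝ × ℝ | 0 < p.1} := isOpen_lt continuous_const continuous_fst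
  have hGuiU : Gui θ ⊆ {p : ℝ × ℝ | 0 < p.1} := fun p hp => hp.1
  have hIpot : Integrable (fun p : ℝ × ℝ => k / p.1 ^ 2 * ‖u p‖ ^ 2) := by
    apply Continuous.integrable_of_hasCompactSupport
    · apply continuous_of_zero_off _ (tsupport u) {p : ℝ × ℝ | 0 < p.1}
        isClosed_closure hUr (hsupp.trans hGuiU)
      · exact ContinuousOn.mul
          (ContinuousOn.div continuousOn_const ((continuous_fst.pow 2).continuousOn)
            (fun p hp => pow_ne_zero 2 (ne_of_gt (hp : 0 < p.1))))
          ((hu.continuous.norm.pow 2).continuousOn)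
      · intro p hp
        have : u p = 0 := image_eq_zero_of_notMem_tsupport hp
        simp [this]
    · exact hcs.mono' (fun p hp => subset_closure
        (show u p ≠ 0 from fun h0 => hp (by simp [h0])))
  have hIF : Integrable (fun p : ℝ × ℝ => ‖fderiv ℝ u p (1, 0)‖ ^ 2 + ‖fderiv ℝ u p (0, 1)‖ ^ 2
      + k / p.1 ^ 2 * ‖u p‖ ^ 2) := (hId1.add hId2).add hIpot
  -- step 0 : integrals over Gui θ equal integrals over the plane
  have hnotin : ∀ p, p ∉ Gui θ → u p = 0 ∧ fderiv ℝ u p = 0 := by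
    intro p hp
    have hpt : p ∉ tsupport u := fun h => hp (hsupp h)
    exact ⟨image_eq_zero_of_notMem_tsupport hpt,
      Function.notMem_support.mp (fun hmem => hpt (support_fderiv_subset ℝ hmem))⟩
  have h0L : ∫ p in Gui θ, (‖fderiv ℝ u p (1, 0)‖ ^ 2 + ‖fderiv ℝ u p (0, 1)‖ ^ 2
      + (ω ^ 2 - 1 / 4) / p.1 ^ 2 * ‖u p‖ ^ 2)
      = ∫ p : ℝ × ℝ, (‖fderiv ℝ u p (1, 0)‖ ^ 2 + ‖fderiv ℝ u p (0, 1)‖ ^ 2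
      + k / p.1 ^ 2 * ‖u p‖ ^ 2) := by
    rw [← hk]
    apply setIntegral_eq_integral_of_forall_compl_eq_zero
    intro p hp
    obtain ⟨h1, h2⟩ := hnotin p hp
    simp [h1, h2]
  have h0R : ∫ p in Gui θ, ‖u p‖ ^ 2 = ∫ p : ℝ × ℝ, ‖u p‖ ^ 2 := by
    apply setIntegral_eq_integral_of_forall_compl_eq_zero
    intro p hp
    simp [(hnotin p hp).1]
  rw [ge_iff_le, h0L, h0R]
  -- integrability of the two rotated pieces
  have hUB : IsOpen {p : ℝ × ℝ | 0 < s * p.1 + c * p.2} :=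
    isOpen_lt continuous_const (by fun_prop)
  have hIH1 : Integrable (fun p : ℝ × ℝ =>
      ‖fderiv ℝ v p (1, 0)‖ ^ 2 + k / (s * p.1 + c * p.2) ^ 2 * ‖v p‖ ^ 2) := by
    apply Integrable.add
    · exact (((fderiv_apply_continuous v hvC _).norm).pow 2).integrable_of_hasCompactSupport
        (fderiv_apply_cs v hvcs _)
    · apply Continuous.integrable_of_hasCompactSupport
      · apply continuous_of_zero_off _ (tsupport v) _ isClosed_closure hUB hsuppB
        · exact ContinuousOn.mul
            (ContinuousOn.div continuousOn_const (Continuous.continuousOn (by fun_prop))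
              (fun p hp => pow_ne_zero 2 (ne_of_gt (hp : 0 < s * p.1 + c * p.2))))
            ((hvC.continuous.norm.pow 2).continuousOn)
        · intro p hp
          have : v p = 0 := image_eq_zero_of_notMem_tsupport hp
          simp [this]
      · exact hvcs.mono' (fun p hp => subset_closure
          (show v p ≠ 0 from fun h0 => hp (by simp [h0])))
  have hIH2 : Integrable (fun p : ℝ × ℝ => ‖fderiv ℝ v p (0, 1)‖ ^ 2 - ‖v p‖ ^ 2) := by
    apply Integrable.sub
    · exact (((fderiv_apply_continuous v hvC _).norm).pow 2).integrable_of_hasCompactSupport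
        (fderiv_apply_cs v hvcs _)
    · exact ((hvC.continuous.norm).pow 2).integrable_of_hasCompactSupport
        (hvcs.mono' (fun p hp => subset_closure
          (show v p ≠ 0 from fun h0 => hp (by simp [h0]))))
  -- the key chain of identities
  have step2 : ∫ p : ℝ × ℝ, ((‖fderiv ℝ u p (1, 0)‖ ^ 2 + ‖fderiv ℝ u p (0, 1)‖ ^ 2
        + k / p.1 ^ 2 * ‖u p‖ ^ 2) - ‖u p‖ ^ 2)
      = ∫ p : ℝ × ℝ, ((‖fderiv ℝ v p (1, 0)‖ ^ 2 + k / (s * p.1 + c * p.2) ^ 2 * ‖v p‖ ^ 2)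
        + (‖fderiv ℝ v p (0, 1)‖ ^ 2 - ‖v p‖ ^ 2)) := by
    rw [← Rmap_integral_comp s c hsc (fun p => (‖fderiv ℝ u p (1, 0)‖ ^ 2
      + ‖fderiv ℝ u p (0, 1)‖ ^ 2 + k / p.1 ^ 2 * ‖u p‖ ^ 2) - ‖u p‖ ^ 2)]
    congr 1
    funext p
    have hrot := rot_identity (fderiv ℝ u (Rmap s c p)) s c hsc
    have h10 : Rmap s c ((1:ℝ), (0:ℝ)) = (s, c) := by rw [Rmap_apply]; norm_num
    have h01 : Rmap s c ((0:ℝ), (1:ℝ)) = (c, -s) := by rw [Rmap_apply]; norm_num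
    have h1 : fderiv ℝ v p (1, 0) = fderiv ℝ u (Rmap s c p) (s, c) := by
      rw [hvdef, fderiv_comp_Rmap u hu s c p (1, 0), h10]
    have h2 : fderiv ℝ v p (0, 1) = fderiv ℝ u (Rmap s c p) (c, -s) := by
      rw [hvdef, fderiv_comp_Rmap u hu s c p (0, 1), h01]
    have h3 : (Rmap s c p).1 = s * p.1 + c * p.2 := by rw [Rmap_apply]
    have h4 : v p = u (Rmap s c p) := rfl
    rw [h1, h2, h3, h4]
    linarith [hrot]
  have hA := partA v hvC hvcs hsuppA
  have hB := partB v hvC hvcs s c k hs hks hk0 hsuppB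
  have step3 : ∫ p : ℝ × ℝ, ((‖fderiv ℝ v p (1, 0)‖ ^ 2 + k / (s * p.1 + c * p.2) ^ 2 * ‖v p‖ ^ 2)
        + (‖fderiv ℝ v p (0, 1)‖ ^ 2 - ‖v p‖ ^ 2))
      = (∫ p : ℝ × ℝ, (‖fderiv ℝ v p (1, 0)‖ ^ 2 + k / (s * p.1 + c * p.2) ^ 2 * ‖v p‖ ^ 2))
        + ∫ p : ℝ × ℝ, (‖fderiv ℝ v p (0, 1)‖ ^ 2 - ‖v p‖ ^ 2) :=
    integral_add hIH1 hIH2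
  have step1 : ∫ p : ℝ × ℝ, ((‖fderiv ℝ u p (1, 0)‖ ^ 2 + ‖fderiv ℝ u p (0, 1)‖ ^ 2
        + k / p.1 ^ 2 * ‖u p‖ ^ 2) - ‖u p‖ ^ 2)
      = (∫ p : ℝ × ℝ, (‖fderiv ℝ u p (1, 0)‖ ^ 2 + ‖fderiv ℝ u p (0, 1)‖ ^ 2
        + k / p.1 ^ 2 * ‖u p‖ ^ 2)) - ∫ p : ℝ × ℝ, ‖u p‖ ^ 2 :=
    integral_sub hIF hIu
  linarith [step1 ▸ (step2.trans step3) ▸ (add_nonneg hB hA)]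
end
end

section
/- Let θ ∈ (0, π/2), ω ∈ (0, 1/2], and m ∈ ℤ with m ≠ 0. Then for every u ∈ C_0^∞(Gui(θ); ℂ) one has ∫_{Gui(θ)} (|∂_r u|² + |∂_z u|² + ((m−ω)² − 1/4) r^{−2} |u|²) dr dz ≥ ∫_{Gui(θ)} |u|² dr dz. (Form-level statement that all non-axisymmetric fibers have spectrum bounded below by 1.) -/
open Real MeasureTheory

noncomputable section

section Helpers
open Set
open scoped Manifold


lemma slice1_hcs {G : ℝ × ℝ → ℝ} (h2G : HasCompactSupport G) (y : ℝ) :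
    HasCompactSupport (fun x => G (x, y)) := by
  obtain ⟨r, hr⟩ := h2G.isBounded.subset_closedBall 0
  apply HasCompactSupport.intro (isCompact_Icc (a := -r) (b := r))
  intro x hx
  apply image_eq_zero_of_notMem_tsupport
  intro hmem
  have h := hr hmem
  rw [Metric.mem_closedBall, dist_zero_right, Prod.norm_def] at h
  have h2 : |x| ≤ r := le_trans (by simpa using le_max_left ‖x‖ ‖y‖) h
  rw [abs_le] at h2
  simp only [mem_Icc, not_and_or, not_le] at hx
  rcases hx with hx | hx <;> linarith

lemma slice2_hcs {G : ℝ × ℝ → ℝ} (h2G : HasCompactSupport G) (x : ℝ) :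
    HasCompactSupport (fun y => G (x, y)) := by
  obtain ⟨r, hr⟩ := h2G.isBounded.subset_closedBall 0
  apply HasCompactSupport.intro (isCompact_Icc (a := -r) (b := r))
  intro y hy
  apply image_eq_zero_of_notMem_tsupport
  intro hmem
  have h := hr hmem
  rw [Metric.mem_closedBall, dist_zero_right, Prod.norm_def] at h
  have h2 : |y| ≤ r := le_trans (by simpa using le_max_right ‖x‖ ‖y‖) h
  rw [abs_le] at h2
  simp only [mem_Icc, not_and_or, not_le] at hy
  rcases hy with hy | hy <;> linarith

/-- integral over ℝ of the derivative of a C¹ compactly supported function is 0 -/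
lemma integral_deriv_zero {g : ℝ → ℝ} (hg : ContDiff ℝ 1 g) (h2g : HasCompactSupport g) :
    ∫ x : ℝ, deriv g x = 0 := by
  have hint : Integrable (deriv g) := by
    exact ((hg.continuous_deriv le_rfl).integrable_of_hasCompactSupport h2g.deriv)
  have := integral_add_compl (measurableSet_Iic (a := (0:ℝ))) hint (μ := volume)
  rw [compl_Iic] at this
  rw [← this, h2g.integral_Iic_deriv_eq hg 0, h2g.integral_Ioi_deriv_eq hg 0]
  ring

lemma fderiv_apply_cont {G : ℝ × ℝ → ℝ} (hG : ContDiff ℝ (⊤ : ℕ∞) G) (v : ℝ × ℝ) :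
    Continuous (fun p => fderiv ℝ G p v) :=
  (ContinuousLinearMap.apply ℝ ℝ v).continuous.comp (hG.continuous_fderiv (by simp))

lemma fderiv_apply_hcs {G : ℝ × ℝ → ℝ} (h2G : HasCompactSupport G) (v : ℝ × ℝ) :
    HasCompactSupport (fun p => fderiv ℝ G p v) := by
  apply HasCompactSupport.intro h2G
  intro p hp
  have : fderiv ℝ G p = 0 := Function.notMem_support.mp (fun hs => hp (support_fderiv_subset ℝ hs))
  simp [this]

lemma integral_fderiv_e1 {G : ℝ × ℝ → ℝ} (hG : ContDiff ℝ (⊤ : ℕ∞) G) (h2G : HasCompactSupport G) :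
    ∫ p : ℝ × ℝ, fderiv ℝ G p (1, 0) = 0 := by
  have hint : Integrable (fun p : ℝ × ℝ => fderiv ℝ G p (1, 0)) :=
    (fderiv_apply_cont hG _).integrable_of_hasCompactSupport (fderiv_apply_hcs h2G _)
  rw [show (volume : Measure (ℝ × ℝ)) = (volume.prod volume) from Measure.volume_eq_prod ℝ ℝ] at hint ⊢
  rw [integral_prod_symm _ hint]
  have key : ∀ y : ℝ, ∫ x : ℝ, fderiv ℝ G (x, y) (1, 0) = 0 := by
    intro y
    set g : ℝ → ℝ := fun x => G (x, y) with hgdef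
    have hg : ContDiff ℝ 1 g := (hG.comp (contDiff_id.prodMk contDiff_const)).of_le (by exact_mod_cast le_top)
    have hder : ∀ x : ℝ, deriv g x = fderiv ℝ G (x, y) (1, 0) := by
      intro x
      have h1 : HasDerivAt (fun x : ℝ => (x, y)) ((1 : ℝ), (0 : ℝ)) x :=
        (hasDerivAt_id x).prodMk (hasDerivAt_const x y)
      exact (((hG.differentiable (by simp) (x, y)).hasFDerivAt).comp_hasDerivAt x h1).deriv
    calc ∫ x : ℝ, fderiv ℝ G (x, y) (1, 0) = ∫ x : ℝ, deriv g x := by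
          exact integral_congr_ae (Filter.Eventually.of_forall fun x => (hder x).symm)
      _ = 0 := integral_deriv_zero hg (slice1_hcs h2G y)
  simp only [key, integral_zero]


lemma integral_fderiv_e2 {G : ℝ × ℝ → ℝ} (hG : ContDiff ℝ (⊤ : ℕ∞) G) (h2G : HasCompactSupport G) :
    ∫ p : ℝ × ℝ, fderiv ℝ G p (0, 1) = 0 := by
  have hint : Integrable (fun p : ℝ × ℝ => fderiv ℝ G p (0, 1)) :=
    (fderiv_apply_cont hG _).integrable_of_hasCompactSupport (fderiv_apply_hcs h2G _)
  rw [show (volume : Measure (ℝ × ℝ)) = (volume.prod volume) from Measure.volume_eq_prod ℝ ℝ]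
    at hint ⊢
  rw [integral_prod _ hint]
  have key : ∀ x : ℝ, ∫ y : ℝ, fderiv ℝ G (x, y) (0, 1) = 0 := by
    intro x
    set g : ℝ → ℝ := fun y => G (x, y) with hgdef
    have hg : ContDiff ℝ 1 g := (hG.comp (contDiff_const.prodMk contDiff_id)).of_le (by exact_mod_cast le_top)
    have hder : ∀ y : ℝ, deriv g y = fderiv ℝ G (x, y) (0, 1) := by
      intro y
      have h1 : HasDerivAt (fun y : ℝ => (x, y)) ((0 : ℝ), (1 : ℝ)) y :=
        (hasDerivAt_const y x).prodMk (hasDerivAt_id y)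
      exact (((hG.differentiable (by simp) (x, y)).hasFDerivAt).comp_hasDerivAt y h1).deriv
    calc ∫ y : ℝ, fderiv ℝ G (x, y) (0, 1) = ∫ y : ℝ, deriv g y := by
          exact integral_congr_ae (Filter.Eventually.of_forall fun y => (hder y).symm)
      _ = 0 := integral_deriv_zero hg (slice2_hcs h2G x)
  simp only [key, integral_zero]

lemma integral_fderiv_dir {G : ℝ × ℝ → ℝ} (hG : ContDiff ℝ (⊤ : ℕ∞) G) (h2G : HasCompactSupport G)
    (v : ℝ × ℝ) : ∫ p : ℝ × ℝ, fderiv ℝ G p v = 0 := by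
  have hv : v = v.1 • ((1 : ℝ), (0 : ℝ)) + v.2 • ((0 : ℝ), (1 : ℝ)) := by
    simp [Prod.ext_iff]
  have hptw : ∀ p : ℝ × ℝ, fderiv ℝ G p v
      = v.1 * fderiv ℝ G p (1, 0) + v.2 * fderiv ℝ G p (0, 1) := by
    intro p
    conv_lhs => rw [hv]
    rw [map_add, _root_.map_smul, _root_.map_smul]
    simp [smul_eq_mul]
  have hi1 : Integrable (fun p : ℝ × ℝ => fderiv ℝ G p (1, 0)) :=
    (fderiv_apply_cont hG _).integrable_of_hasCompactSupport (fderiv_apply_hcs h2G _)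
  have hi2 : Integrable (fun p : ℝ × ℝ => fderiv ℝ G p (0, 1)) :=
    (fderiv_apply_cont hG _).integrable_of_hasCompactSupport (fderiv_apply_hcs h2G _)
  calc ∫ p : ℝ × ℝ, fderiv ℝ G p v
      = ∫ p : ℝ × ℝ, (v.1 * fderiv ℝ G p (1, 0) + v.2 * fderiv ℝ G p (0, 1)) :=
        integral_congr_ae (Filter.Eventually.of_forall hptw)
    _ = 0 := by
        rw [integral_add (hi1.const_mul _) (hi2.const_mul _), integral_const_mul,
          integral_const_mul, integral_fderiv_e1 hG h2G, integral_fderiv_e2 hG h2G]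
        ring

lemma exists_cutoff {a b : ℝ} (ha : 0 < a) (hb : b < π) (hab : a ≤ b) :
    ∃ ψ : ℝ → ℝ, ContDiff ℝ (⊤ : ℕ∞) ψ ∧ (∀ t ∈ Iic (a/2) ∪ Ici ((b+π)/2), ψ t = 0) ∧
      (∀ t ∈ Icc (3*a/4) ((3*b+π)/4), ψ t = 1) := by
  have hd : Disjoint (Iic (a/2) ∪ Ici ((b+π)/2)) (Icc (3*a/4) ((3*b+π)/4)) := by
    rw [Set.disjoint_left]
    rintro t (ht | ht) ⟨h1, h2⟩
    · rw [mem_Iic] at ht; linarith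
    · rw [mem_Ici] at ht; linarith
  obtain ⟨f, hf0, hf1, -⟩ := exists_contMDiffMap_zero_one_of_isClosed (𝓘(ℝ, ℝ)) (n := (⊤ : ℕ∞))
    ((isClosed_Iic).union isClosed_Ici) isClosed_Icc hd
  refine ⟨f, ?_, fun t ht => hf0 ht, fun t ht => hf1 ht⟩
  exact contMDiff_iff_contDiff.mp f.contMDiff

lemma exists_weight {a b : ℝ} (ha : 0 < a) (hb : b < π) (hab : a ≤ b) :
    ∃ w : ℝ → ℝ, ContDiff ℝ (⊤ : ℕ∞) w ∧
      ∀ t ∈ Icc a b, w t = Real.cos t / Real.sin t ∧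
        HasDerivAt w (-(1 / Real.sin t ^ 2)) t := by
  obtain ⟨ψ, hψ, hψ0, hψ1⟩ := exists_cutoff ha hb hab
  have hπ : (0:ℝ) < π := Real.pi_pos
  refine ⟨fun t => ψ t * (Real.cos t / Real.sin t), ?_, ?_⟩
  · rw [contDiff_iff_contDiffAt]
    intro t
    by_cases hsin : Real.sin t = 0
    · obtain ⟨k, hk⟩ := Real.sin_eq_zero_iff.mp hsin
      rcases le_or_gt k 0 with hk0 | hk0
      · have ht : t < a / 2 := by
          have : (k:ℝ) * π ≤ 0 := mul_nonpos_of_nonpos_of_nonneg (by exact_mod_cast hk0) hπ.le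
          nlinarith [hk]
        have hev : (fun t => ψ t * (Real.cos t / Real.sin t)) =ᶠ[nhds t] (fun _ => (0:ℝ)) := by
          filter_upwards [Iio_mem_nhds ht] with x hx
          rw [hψ0 x (Or.inl (le_of_lt (mem_Iio.mp hx)))]; ring
        exact (contDiffAt_const (c := (0:ℝ))).congr_of_eventuallyEq hev
      · have hk1 : (1:ℤ) ≤ k := hk0
        have ht : (b + π) / 2 < t := by
          have : π ≤ (k:ℝ) * π := by
            nlinarith [(by exact_mod_cast hk1 : (1:ℝ) ≤ (k:ℝ))]
          nlinarith [hk]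
        have hev : (fun t => ψ t * (Real.cos t / Real.sin t)) =ᶠ[nhds t] (fun _ => (0:ℝ)) := by
          filter_upwards [Ioi_mem_nhds ht] with x hx
          rw [hψ0 x (Or.inr (le_of_lt (mem_Ioi.mp hx)))]; ring
        exact (contDiffAt_const (c := (0:ℝ))).congr_of_eventuallyEq hev
    · exact (hψ.contDiffAt).mul
        ((Real.contDiff_cos.contDiffAt.of_le (by exact_mod_cast le_top)).div
          (Real.contDiff_sin.contDiffAt.of_le (by exact_mod_cast le_top)) hsin)
  · intro t ht
    obtain ⟨ht1, ht2⟩ := ht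
    have hmem : t ∈ Ioo (3*a/4) ((3*b+π)/4) := ⟨by linarith, by linarith⟩
    have hsin : (0:ℝ) < Real.sin t := Real.sin_pos_of_pos_of_lt_pi (by linarith) (by linarith)
    have hev : (fun t => ψ t * (Real.cos t / Real.sin t))
        =ᶠ[nhds t] (fun x => Real.cos x / Real.sin x) := by
      filter_upwards [Ioo_mem_nhds hmem.1 hmem.2] with x hx
      rw [hψ1 x ⟨hx.1.le, hx.2.le⟩]; ring
    constructor
    · show ψ t * (Real.cos t / Real.sin t) = _
      rw [hψ1 t ⟨hmem.1.le, hmem.2.le⟩]; ring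
    · have hd : HasDerivAt (fun x => Real.cos x / Real.sin x)
          (((-Real.sin t) * Real.sin t - Real.cos t * Real.cos t) / (Real.sin t) ^ 2) t :=
        (Real.hasDerivAt_cos t).div (Real.hasDerivAt_sin t) hsin.ne'
      have heq : ((-Real.sin t) * Real.sin t - Real.cos t * Real.cos t) / (Real.sin t) ^ 2
          = -(1 / Real.sin t ^ 2) := by
        have h2 : Real.sin t ^ 2 ≠ 0 := by positivity
        field_simp
        nlinarith [Real.sin_sq_add_cos_sq t]
      rw [heq] at hd
      exact hd.congr_of_eventuallyEq hev

lemma strip_poincare {u : ℝ × ℝ → ℂ} {c s : ℝ} (hc : 0 < c) (hs : 0 < s)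
    (hcs : c ^ 2 + s ^ 2 = 1)
    (hu : ContDiff ℝ (⊤ : ℕ∞) u) (h2u : HasCompactSupport u)
    (hsupp : ∀ p ∈ tsupport u, 0 < c * p.1 - s * p.2 ∧ c * p.1 - s * p.2 < π) :
    ∫ p : ℝ × ℝ, ‖u p‖ ^ 2 ≤ ∫ p : ℝ × ℝ, ‖fderiv ℝ u p (c, -s)‖ ^ 2 := by
  rcases (tsupport u).eq_empty_or_nonempty with hK | hKne
  · have hu0 : u = fun _ => (0 : ℂ) := by
      funext p
      exact image_eq_zero_of_notMem_tsupport (by simp [hK])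
    rw [hu0]
    simp
  -- the linear functional φ
  set Lφ : (ℝ × ℝ) →L[ℝ] ℝ :=
    c • (ContinuousLinearMap.fst ℝ ℝ ℝ) - s • (ContinuousLinearMap.snd ℝ ℝ ℝ) with hLφ
  set φ : ℝ × ℝ → ℝ := fun p => c * p.1 - s * p.2 with hφ
  have hφL : ∀ p, Lφ p = φ p := by
    intro p
    simp [hLφ, hφ, smul_eq_mul]
  have hφcont : Continuous φ := by fun_prop
  have hφd : ∀ p, HasFDerivAt φ Lφ p := by
    intro p
    have : HasFDerivAt (fun q => Lφ q) Lφ p := Lφ.hasFDerivAt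
    exact this.congr_of_eventuallyEq (Filter.Eventually.of_forall fun q => (hφL q).symm)
  have hLφn : Lφ (c, -s) = 1 := by
    rw [hφL]; simp [hφ]; nlinarith
  -- min and max of φ on the support
  obtain ⟨pa, hpaK, hpa⟩ := (h2u.isCompact).exists_isMinOn hKne hφcont.continuousOn
  obtain ⟨pb, hpbK, hpb⟩ := (h2u.isCompact).exists_isMaxOn hKne hφcont.continuousOn
  set a := φ pa with hadef
  set b := φ pb with hbdef
  have ha : 0 < a := (hsupp pa hpaK).1
  have hb : b < π := (hsupp pb hpbK).2
  have hab : a ≤ b := hpa hpbK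
  obtain ⟨w, hw, hwab⟩ := exists_weight ha hb hab
  -- the main objects
  set N : ℝ × ℝ → ℝ := fun p => (u p).re * (u p).re + (u p).im * (u p).im with hN
  set W : ℝ × ℝ → ℝ := fun p => w (φ p) with hW
  set G : ℝ × ℝ → ℝ := fun p => N p * W p with hG
  have hNval : ∀ p, N p = ‖u p‖ ^ 2 := by
    intro p
    simp only [hN]
    rw [← Complex.normSq_apply, ← Complex.sq_norm]
  have hNsm : ContDiff ℝ (⊤ : ℕ∞) N := by
    have hre : ContDiff ℝ (⊤ : ℕ∞) (fun p => (u p).re) :=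
      (Complex.reCLM.contDiff.of_le (by exact_mod_cast le_top)).comp hu
    have him : ContDiff ℝ (⊤ : ℕ∞) (fun p => (u p).im) :=
      (Complex.imCLM.contDiff.of_le (by exact_mod_cast le_top)).comp hu
    exact (hre.mul hre).add (him.mul him)
  have hWsm : ContDiff ℝ (⊤ : ℕ∞) W := hw.comp (by fun_prop)
  have hGsm : ContDiff ℝ (⊤ : ℕ∞) G := hNsm.mul hWsm
  have hGsupp : HasCompactSupport G := by
    apply HasCompactSupport.intro h2u
    intro p hp
    have h0 : u p = 0 := image_eq_zero_of_notMem_tsupport hp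
    simp [hG, hN, h0]
  -- integration by parts
  have hIBP : ∫ p : ℝ × ℝ, fderiv ℝ G p (c, -s) = 0 := integral_fderiv_dir hGsm hGsupp _
  -- pointwise identity
  have hptw : ∀ p : ℝ × ℝ, ‖fderiv ℝ u p (c, -s)‖ ^ 2 - ‖u p‖ ^ 2
      = ‖fderiv ℝ u p (c, -s) - (W p : ℂ) * u p‖ ^ 2 + fderiv ℝ G p (c, -s) := by
    intro p
    by_cases hp : p ∈ tsupport u
    · -- on the support
      have htmem : φ p ∈ Icc a b := ⟨hpa hp, hpb hp⟩
      obtain ⟨hwval, hwd⟩ := hwab (φ p) htmem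
      have hσ : 0 < Real.sin (φ p) :=
        Real.sin_pos_of_pos_of_lt_pi (lt_of_lt_of_le ha htmem.1) (lt_of_le_of_lt htmem.2 hb)
      have hud : HasFDerivAt u (fderiv ℝ u p) p :=
        (hu.differentiable (by simp) p).hasFDerivAt
      have hre : HasFDerivAt (fun q => (u q).re) (Complex.reCLM.comp (fderiv ℝ u p)) p :=
        Complex.reCLM.hasFDerivAt.comp p hud
      have him : HasFDerivAt (fun q => (u q).im) (Complex.imCLM.comp (fderiv ℝ u p)) p :=
        Complex.imCLM.hasFDerivAt.comp p hud
      have hNd : HasFDerivAt N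
          (((u p).re • (Complex.reCLM.comp (fderiv ℝ u p))
              + (u p).re • (Complex.reCLM.comp (fderiv ℝ u p)))
            + ((u p).im • (Complex.imCLM.comp (fderiv ℝ u p))
              + (u p).im • (Complex.imCLM.comp (fderiv ℝ u p)))) p :=
        (hre.mul hre).add (him.mul him)
      have hWd : HasFDerivAt W ((-(1 / Real.sin (φ p) ^ 2)) • Lφ) p :=
        hwd.comp_hasFDerivAt p (hφd p)
      have hGd : HasFDerivAt G
          (N p • ((-(1 / Real.sin (φ p) ^ 2)) • Lφ)
            + W p • (((u p).re • (Complex.reCLM.comp (fderiv ℝ u p))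
              + (u p).re • (Complex.reCLM.comp (fderiv ℝ u p)))
            + ((u p).im • (Complex.imCLM.comp (fderiv ℝ u p))
              + (u p).im • (Complex.imCLM.comp (fderiv ℝ u p))))) p := hNd.mul hWd
      rw [hGd.fderiv]
      have hWp : W p = Real.cos (φ p) / Real.sin (φ p) := hwval
      have hnorm : ∀ z : ℂ, ‖z‖ ^ 2 = z.re * z.re + z.im * z.im := by
        intro z
        rw [← Complex.normSq_apply, ← Complex.sq_norm]
      simp only [ContinuousLinearMap.add_apply, ContinuousLinearMap.smul_apply,
        ContinuousLinearMap.comp_apply, Complex.reCLM_apply, Complex.imCLM_apply,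
        hLφn, hnorm, Complex.sub_re, Complex.sub_im, Complex.mul_re, Complex.mul_im,
        Complex.ofReal_re, Complex.ofReal_im, hWp, hN, smul_eq_mul]
      have h1σ : 1 / Real.sin (φ p) ^ 2 = (Real.cos (φ p) / Real.sin (φ p)) ^ 2 + 1 := by
        field_simp
        all_goals nlinarith [Real.sin_sq_add_cos_sq (φ p)]
      rw [h1σ]
      ring
    · -- off the support
      have h0 : u p = 0 := image_eq_zero_of_notMem_tsupport hp
      have hdf : fderiv ℝ u p = 0 :=
        Function.notMem_support.mp (fun hs' => hp (support_fderiv_subset ℝ hs'))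
      have hdG : fderiv ℝ G p = 0 := by
        apply Function.notMem_support.mp
        intro hs'
        apply hp
        have h1 : tsupport G ⊆ tsupport u := by
          apply closure_minimal _ (isClosed_tsupport u)
          intro q hq
          by_contra hqn
          have h0q : u q = 0 := image_eq_zero_of_notMem_tsupport hqn
          apply hq
          simp [hG, hN, h0q]
        exact h1 (support_fderiv_subset ℝ hs')
      simp [h0, hdf, hdG]
  -- integrability
  have hDcont : Continuous (fun p => fderiv ℝ u p (c, -s)) :=
    (ContinuousLinearMap.apply ℝ ℂ ((c : ℝ), (-s : ℝ))).continuous.comp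
      (hu.continuous_fderiv (by simp))
  have hDhcs : HasCompactSupport (fun p : ℝ × ℝ => fderiv ℝ u p (c, -s)) := by
    apply HasCompactSupport.intro h2u
    intro p hp
    have : fderiv ℝ u p = 0 :=
      Function.notMem_support.mp (fun hs' => hp (support_fderiv_subset ℝ hs'))
    simp [this]
  have hInt1 : Integrable (fun p : ℝ × ℝ => ‖fderiv ℝ u p (c, -s)‖ ^ 2) := by
    apply ((hDcont.norm).pow 2).integrable_of_hasCompactSupport
    apply HasCompactSupport.intro h2u
    intro p hp
    have : fderiv ℝ u p = 0 :=
      Function.notMem_support.mp (fun hs' => hp (support_fderiv_subset ℝ hs'))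
    simp [this]
  have hInt2 : Integrable (fun p : ℝ × ℝ => ‖u p‖ ^ 2) := by
    apply ((hu.continuous.norm).pow 2).integrable_of_hasCompactSupport
    apply HasCompactSupport.intro h2u
    intro p hp
    simp [image_eq_zero_of_notMem_tsupport hp]
  have hqcont : Continuous (fun p => ‖fderiv ℝ u p (c, -s) - (W p : ℂ) * u p‖ ^ 2) := by
    apply Continuous.pow
    apply Continuous.norm
    exact hDcont.sub ((Complex.continuous_ofReal.comp hWsm.continuous).mul hu.continuous)
  have hqhcs : HasCompactSupport
      (fun p : ℝ × ℝ => ‖fderiv ℝ u p (c, -s) - (W p : ℂ) * u p‖ ^ 2) := by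
    apply HasCompactSupport.intro h2u
    intro p hp
    have h0 : u p = 0 := image_eq_zero_of_notMem_tsupport hp
    have hdf : fderiv ℝ u p = 0 :=
      Function.notMem_support.mp (fun hs' => hp (support_fderiv_subset ℝ hs'))
    simp [h0, hdf]
  have hIntq : Integrable (fun p : ℝ × ℝ => ‖fderiv ℝ u p (c, -s) - (W p : ℂ) * u p‖ ^ 2) :=
    hqcont.integrable_of_hasCompactSupport hqhcs
  have hIntG : Integrable (fun p : ℝ × ℝ => fderiv ℝ G p (c, -s)) :=
    (fderiv_apply_cont hGsm _).integrable_of_hasCompactSupport (fderiv_apply_hcs hGsupp _)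
  -- conclusion
  have key : (∫ p : ℝ × ℝ, ‖fderiv ℝ u p (c, -s)‖ ^ 2) - ∫ p : ℝ × ℝ, ‖u p‖ ^ 2
      = (∫ p : ℝ × ℝ, ‖fderiv ℝ u p (c, -s) - (W p : ℂ) * u p‖ ^ 2)
        + ∫ p : ℝ × ℝ, fderiv ℝ G p (c, -s) := by
    rw [← integral_sub hInt1 hInt2, ← integral_add hIntq hIntG]
    exact integral_congr_ae (Filter.Eventually.of_forall hptw)
  have hqnn : 0 ≤ ∫ p : ℝ × ℝ, ‖fderiv ℝ u p (c, -s) - (W p : ℂ) * u p‖ ^ 2 :=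
    integral_nonneg fun p => by positivity
  rw [hIBP, add_zero] at key
  linarith

end Helpers

/-- All non-axisymmetric fibers `m ≠ 0` have quadratic form bounded below by 1. -/
theorem nonaxisymmetric_fibers_bounded_below (θ ω : ℝ) (m : ℤ)
    (hθ : θ ∈ Set.Ioo 0 (π / 2)) (hω : ω ∈ Set.Ioc 0 (1 / 2)) (hm : m ≠ 0) :
    ∀ u : ℝ × ℝ → ℂ,
      ContDiff ℝ (⊤ : ℕ∞) u → HasCompactSupport u → tsupport u ⊆ Gui θ →
      ∫ p in Gui θ, (‖fderiv ℝ u p (1, 0)‖ ^ 2 + ‖fderiv ℝ u p (0, 1)‖ ^ 2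
          + (((m : ℝ) - ω) ^ 2 - 1 / 4) / p.1 ^ 2 * ‖u p‖ ^ 2)
      ≥ ∫ p in Gui θ, ‖u p‖ ^ 2 := by
  intro u hu0 h2u hsupp
  have hu : ContDiff ℝ (⊤ : ℕ∞) u := hu0.of_le (by simp)
  set c := Real.cos θ with hcdef
  set s := Real.sin θ with hsdef
  have hc : 0 < c := Real.cos_pos_of_mem_Ioo ⟨by linarith [hθ.1, Real.pi_pos], hθ.2⟩
  have hs : 0 < s := Real.sin_pos_of_pos_of_lt_pi hθ.1 (by linarith [hθ.2, Real.pi_pos])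
  have hcs : c ^ 2 + s ^ 2 = 1 := by rw [hcdef, hsdef]; exact Real.cos_sq_add_sin_sq θ
  set C := ((m : ℝ) - ω) ^ 2 - 1 / 4 with hCdef
  have hC : 0 ≤ C := by
    have hm' : m ≤ -1 ∨ 1 ≤ m := by omega
    rcases hm' with h | h
    · have : (m : ℝ) ≤ -1 := by exact_mod_cast h
      rw [hCdef]; nlinarith [hω.1, hω.2]
    · have : (1 : ℝ) ≤ (m : ℝ) := by exact_mod_cast h
      rw [hCdef]; nlinarith [hω.1, hω.2]
  -- Gui is inside the strip
  have hGuiStrip : ∀ p : ℝ × ℝ, p ∈ Gui θ → 0 < c * p.1 - s * p.2 ∧ c * p.1 - s * p.2 < π := by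
    rintro p ⟨h1, h2, h3, h4⟩
    have htan : Real.tan θ = s / c := Real.tan_eq_sin_div_cos θ
    have h3' : p.2 * (s / c) < p.1 := by
      rw [← htan]; exact lt_of_le_of_lt (le_max_right 0 (p.2 * Real.tan θ)) h3
    have h4' : p.1 < p.2 * (s / c) + π / c := by rw [← htan]; exact h4
    constructor
    · have := mul_lt_mul_of_pos_right h3' hc
      have he : p.2 * (s / c) * c = p.2 * s := by field_simp
      rw [he] at this
      nlinarith
    · have := mul_lt_mul_of_pos_right h4' hc
      have he : (p.2 * (s / c) + π / c) * c = p.2 * s + π := by field_simp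
      rw [he] at this
      nlinarith
  have hstrip : ∀ p ∈ tsupport u, 0 < c * p.1 - s * p.2 ∧ c * p.1 - s * p.2 < π :=
    fun p hp => hGuiStrip p (hsupp hp)
  -- integrands vanish off the support
  have hu_zero : ∀ p : ℝ × ℝ, p ∉ tsupport u → u p = 0 :=
    fun p hp => image_eq_zero_of_notMem_tsupport hp
  have hdf_zero : ∀ p : ℝ × ℝ, p ∉ tsupport u → fderiv ℝ u p = 0 :=
    fun p hp => Function.notMem_support.mp (fun hs' => hp (support_fderiv_subset ℝ hs'))
  -- convert to integrals over the whole plane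
  rw [setIntegral_eq_integral_of_forall_compl_eq_zero
      (f := fun p : ℝ × ℝ => ‖u p‖ ^ 2)
      (fun p hp => by simp [hu_zero p (fun h => hp (hsupp h))]),
    setIntegral_eq_integral_of_forall_compl_eq_zero
      (fun p hp => by
        have h1 := hu_zero p (fun h => hp (hsupp h))
        have h2 := hdf_zero p (fun h => hp (hsupp h))
        simp [h1, h2])]
  -- continuity and integrability of all pieces
  have hDcont : ∀ v : ℝ × ℝ, Continuous (fun p => fderiv ℝ u p v) := fun v =>
    (ContinuousLinearMap.apply ℝ ℂ v).continuous.comp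
      (hu.continuous_fderiv (by simp))
  have hDint : ∀ v : ℝ × ℝ, Integrable (fun p : ℝ × ℝ => ‖fderiv ℝ u p v‖ ^ 2) := by
    intro v
    apply (((hDcont v).norm).pow 2).integrable_of_hasCompactSupport
    apply HasCompactSupport.intro h2u
    intro p hp
    simp [hdf_zero p hp]
  have hVcont : Continuous (fun p : ℝ × ℝ => C / p.1 ^ 2 * ‖u p‖ ^ 2) := by
    rw [continuous_iff_continuousAt]
    intro p
    by_cases hp : p ∈ tsupport u
    · have h1 : 0 < p.1 := (hsupp hp).1
      have hA : ContinuousAt (fun q : ℝ × ℝ => C / q.1 ^ 2) p :=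
        ContinuousAt.div continuousAt_const (by fun_prop) (pow_ne_zero 2 h1.ne')
      have hB : ContinuousAt (fun q : ℝ × ℝ => ‖u q‖ ^ 2) p := ((hu.continuous.norm).pow 2).continuousAt
      exact hA.mul hB
    · apply Filter.EventuallyEq.continuousAt (y := 0)
      filter_upwards [(isClosed_tsupport u).isOpen_compl.mem_nhds hp] with q hq
      simp [hu_zero q hq]
  have hVint : Integrable (fun p : ℝ × ℝ => C / p.1 ^ 2 * ‖u p‖ ^ 2) := by
    apply hVcont.integrable_of_hasCompactSupport
    apply HasCompactSupport.intro h2u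
    intro p hp
    simp [hu_zero p hp]
  have hIntFull : Integrable (fun p : ℝ × ℝ =>
      ‖fderiv ℝ u p (1, 0)‖ ^ 2 + ‖fderiv ℝ u p (0, 1)‖ ^ 2 + C / p.1 ^ 2 * ‖u p‖ ^ 2) :=
    ((hDint (1, 0)).add (hDint (0, 1))).add hVint
  -- pointwise bound
  have hptw : ∀ p : ℝ × ℝ, ‖fderiv ℝ u p (c, -s)‖ ^ 2
      ≤ ‖fderiv ℝ u p (1, 0)‖ ^ 2 + ‖fderiv ℝ u p (0, 1)‖ ^ 2 + C / p.1 ^ 2 * ‖u p‖ ^ 2 := by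
    intro p
    have hsplit : fderiv ℝ u p (c, -s)
        = c • fderiv ℝ u p (1, 0) + (-s) • fderiv ℝ u p (0, 1) := by
      have hv : ((c : ℝ), (-s : ℝ)) = c • ((1 : ℝ), (0 : ℝ)) + (-s) • ((0 : ℝ), (1 : ℝ)) := by
        simp [Prod.ext_iff]
      rw [hv, map_add, _root_.map_smul, _root_.map_smul]
    have hnb : ‖fderiv ℝ u p (c, -s)‖ ≤ c * ‖fderiv ℝ u p (1, 0)‖ + s * ‖fderiv ℝ u p (0, 1)‖ := by
      rw [hsplit]
      refine le_trans (norm_add_le _ _) ?_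
      rw [norm_smul, norm_smul]
      simp [abs_of_pos hc, abs_of_pos hs, Real.norm_eq_abs]
    have hsq : ‖fderiv ℝ u p (c, -s)‖ ^ 2
        ≤ (c * ‖fderiv ℝ u p (1, 0)‖ + s * ‖fderiv ℝ u p (0, 1)‖) ^ 2 := by
      apply pow_le_pow_left₀ (norm_nonneg _) hnb
    have hVnn : 0 ≤ C / p.1 ^ 2 * ‖u p‖ ^ 2 :=
      mul_nonneg (div_nonneg hC (sq_nonneg _)) (sq_nonneg _)
    nlinarith [sq_nonneg (s * ‖fderiv ℝ u p (1, 0)‖ - c * ‖fderiv ℝ u p (0, 1)‖),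
      norm_nonneg (fderiv ℝ u p (1, 0)), norm_nonneg (fderiv ℝ u p (0, 1))]
  calc ∫ p : ℝ × ℝ, ‖u p‖ ^ 2 ≤ ∫ p : ℝ × ℝ, ‖fderiv ℝ u p (c, -s)‖ ^ 2 :=
        strip_poincare hc hs hcs hu h2u hstrip
    _ ≤ ∫ p : ℝ × ℝ, (‖fderiv ℝ u p (1, 0)‖ ^ 2 + ‖fderiv ℝ u p (0, 1)‖ ^ 2
          + C / p.1 ^ 2 * ‖u p‖ ^ 2) := integral_mono (hDint (c, -s)) hIntFull hptw
end
end

section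
/- Let θ ∈ (0, π/2). For every u ∈ C_0^∞(Ω_θ; ℂ) one has ∫_{Ω_θ} |∂_t u|² ds dt − ∫_{Ω_θ} |u|² ds dt ≥ ∫_{T_θ} f(t) |u|² ds dt, where f(t) = π²/(π − t/4)² − 1 and T_θ = {(s,t) ∈ Ω_θ : s < −ρ₀(t)/2} with ρ₀(t) = (t/2) cot θ. (Local Hardy inequality for the transverse part of the energy.) -/
open Real MeasureTheory intervalIntegral

noncomputable section

lemma oneD (v : ℝ → ℝ) (hv : ContDiff ℝ (⊤ : ℕ∞) v) (hc : HasCompactSupport v)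
    (a b : ℝ) (hab : a < b) (hsupp : tsupport v ⊆ Set.Ioo a b) :
    (π / (b - a))^2 * ∫ t, (v t)^2 ≤ ∫ t, (deriv v t)^2 := by
  set K := tsupport v with hK
  rcases K.eq_empty_or_nonempty with he | hne
  · have hv0 : ∀ t, v t = 0 := fun t => by
      by_contra h
      exact absurd (subset_tsupport v h) (by simp [← hK, he])
    have hd0 : ∀ t, deriv v t = 0 := fun t => by
      have : (fun _ : ℝ => (0:ℝ)) = v := funext fun t => (hv0 t).symm
      rw [← this, deriv_const]
    simp [hv0, hd0]
  · -- nonempty compact support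
    have hKc : IsCompact K := hc
    obtain ⟨c, hcK, hcmin⟩ := hKc.exists_isLeast hne
    obtain ⟨d, hdK, hdmax⟩ := hKc.exists_isGreatest hne
    have hcab : c ∈ Set.Ioo a b := hsupp hcK
    have hdab : d ∈ Set.Ioo a b := hsupp hdK
    have hcd : c ≤ d := hdmax hcK
    set a₁ := (a + c)/2 with ha₁
    set b₁ := (d + b)/2 with hb₁
    have haa₁ : a < a₁ := by simp [ha₁]; linarith [hcab.1]
    have ha₁c : a₁ < c := by simp [ha₁]; linarith [hcab.1]
    have hdb₁ : d < b₁ := by simp [hb₁]; linarith [hdab.2]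
    have hb₁b : b₁ < b := by simp [hb₁]; linarith [hdab.2]
    have hab₁ : a₁ ≤ b₁ := by linarith
    have hKsub : K ⊆ Set.Ioo a₁ b₁ := fun t ht =>
      ⟨lt_of_lt_of_le ha₁c (hcmin ht), lt_of_le_of_lt (hdmax ht) hdb₁⟩
    -- values and derivatives vanish outside Ioo a₁ b₁
    have hv0 : ∀ t ∉ Set.Ioo a₁ b₁, v t = 0 := fun t ht => by
      by_contra h; exact ht (hKsub (subset_tsupport v h))
    have hd0 : ∀ t ∉ Set.Ioo a₁ b₁, deriv v t = 0 := fun t ht => by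
      by_contra h
      exact ht (hKsub (support_deriv_subset (Function.mem_support.2 h)))
    -- transfer line integrals to interval integrals
    have hIv : (∫ t, (v t)^2) = ∫ t in a₁..b₁, (v t)^2 := by
      rw [integral_of_le hab₁]
      exact (setIntegral_eq_integral_of_forall_compl_eq_zero (fun t ht => by
        rw [hv0 t (fun h => ht (Set.Ioo_subset_Ioc_self h))]; norm_num)).symm
    have hId : (∫ t, (deriv v t)^2) = ∫ t in a₁..b₁, (deriv v t)^2 := by
      rw [integral_of_le hab₁]
      exact (setIntegral_eq_integral_of_forall_compl_eq_zero (fun t ht => by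
        rw [hd0 t (fun h => ht (Set.Ioo_subset_Ioc_self h))]; norm_num)).symm
    set k := π / (b - a) with hk
    have hkpos : 0 < k := div_pos Real.pi_pos (by linarith)
    set φ : ℝ → ℝ := fun t => k * (Real.cos (k*(t-a)) / Real.sin (k*(t-a))) with hφ
    have hsin : ∀ t ∈ Set.Icc a₁ b₁, 0 < Real.sin (k*(t-a)) := by
      intro t ht
      apply Real.sin_pos_of_pos_of_lt_pi
      · have : a < t := lt_of_lt_of_le haa₁ ht.1
        apply mul_pos hkpos; linarith
      · have htb : t < b := lt_of_le_of_lt ht.2 hb₁b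
        have : k * (t - a) < k * (b - a) := by
          apply mul_lt_mul_of_pos_left _ hkpos; linarith
        rwa [hk, div_mul_cancel₀] at this
        linarith
    have hτ : ∀ t : ℝ, HasDerivAt (fun t => k*(t-a)) k t := fun t => by
      simpa using ((hasDerivAt_id t).sub_const a).const_mul k
    have hφd : ∀ t ∈ Set.Icc a₁ b₁, HasDerivAt φ (-(k^2) - (φ t)^2) t := by
      intro t ht
      have hs := hsin t ht
      have hcos : HasDerivAt (fun t => Real.cos (k*(t-a)))
          (-Real.sin (k*(t-a)) * k) t :=
        (Real.hasDerivAt_cos _).comp t (hτ t)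
      have hsinD : HasDerivAt (fun t => Real.sin (k*(t-a)))
          (Real.cos (k*(t-a)) * k) t :=
        (Real.hasDerivAt_sin _).comp t (hτ t)
      have hdiv := (hcos.fun_div hsinD hs.ne')
      have := hdiv.const_mul k
      refine this.congr_deriv (Eq.symm ?_)
      have h1 := Real.sin_sq_add_cos_sq (k*(t-a))
      simp only [hφ]
      field_simp
    have hvd : ∀ t : ℝ, HasDerivAt v (deriv v t) t := fun t =>
      ((hv.differentiable (by simp)) t).hasDerivAt
    have hq : ∀ t : ℝ, HasDerivAt (fun t => (v t)^2) (2 * v t * deriv v t) t := by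
      intro t
      have := (hvd t).fun_pow 2
      simpa [mul_comm] using this
    have hvc : Continuous v := hv.continuous
    have hdc : Continuous (deriv v) := hv.continuous_deriv (by simp)
    have huIcc : Set.uIcc a₁ b₁ = Set.Icc a₁ b₁ := Set.uIcc_of_le hab₁
    have hφc : ContinuousOn φ (Set.uIcc a₁ b₁) := by
      rw [huIcc]
      apply ContinuousOn.mul continuousOn_const
      exact ContinuousOn.div
        (Real.continuous_cos.comp (by fun_prop)).continuousOn
        (Real.continuous_sin.comp (by fun_prop)).continuousOn
        (fun t ht => (hsin t ht).ne')
    have hφ'c : ContinuousOn (fun t => -(k^2) - (φ t)^2) (Set.uIcc a₁ b₁) :=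
      ContinuousOn.sub continuousOn_const (hφc.pow 2)
    -- integration by parts
    have hva₁ : v a₁ = 0 := hv0 a₁ (by simp)
    have hvb₁ : v b₁ = 0 := hv0 b₁ (by simp)
    have hibp := integral_mul_deriv_eq_deriv_mul
      (u := φ) (v := fun t => (v t)^2)
      (u' := fun t => -(k^2) - (φ t)^2) (v' := fun t => 2 * v t * deriv v t)
      (fun x hx => hφd x (huIcc ▸ hx))
      (fun x _ => hq x)
      (hφ'c.intervalIntegrable)
      (Continuous.intervalIntegrable (by fun_prop) _ _)
    simp only [hva₁, hvb₁] at hibp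
    norm_num at hibp
    -- expansion
    have hint1 : IntervalIntegrable (fun t => (deriv v t)^2) volume a₁ b₁ :=
      Continuous.intervalIntegrable (by fun_prop) _ _
    have hint2 : IntervalIntegrable (fun t => φ t * (2 * v t * deriv v t)) volume a₁ b₁ :=
      (hφc.mul (Continuous.continuousOn (by fun_prop))).intervalIntegrable
    have hint3 : IntervalIntegrable (fun t => (φ t)^2 * (v t)^2) volume a₁ b₁ :=
      ((hφc.pow 2).mul (Continuous.continuousOn (by fun_prop))).intervalIntegrable
    have hint4 : IntervalIntegrable (fun t => (-(k^2) - (φ t)^2) * (v t)^2) volume a₁ b₁ :=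
      (hφ'c.mul (Continuous.continuousOn (by fun_prop))).intervalIntegrable
    have hint5 : IntervalIntegrable (fun t => k^2 * (v t)^2) volume a₁ b₁ :=
      Continuous.intervalIntegrable (by fun_prop) _ _
    have hexp : (∫ t in a₁..b₁, (deriv v t - φ t * v t)^2)
        = ((∫ t in a₁..b₁, (deriv v t)^2)
            - ∫ t in a₁..b₁, φ t * (2 * v t * deriv v t))
          + ∫ t in a₁..b₁, (φ t)^2 * (v t)^2 := by
      rw [← intervalIntegral.integral_sub hint1 hint2,
        ← intervalIntegral.integral_add (hint1.sub hint2) hint3]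
      apply intervalIntegral.integral_congr
      intro t _
      ring
    have hsplit : (∫ t in a₁..b₁, (-(k^2) - (φ t)^2) * (v t)^2)
        = -(k^2 * ∫ t in a₁..b₁, (v t)^2) - ∫ t in a₁..b₁, (φ t)^2 * (v t)^2 := by
      have hpt : ∀ t, (-(k^2) - (φ t)^2) * (v t)^2
          = -(k^2 * (v t)^2) - (φ t)^2 * (v t)^2 := fun t => by ring
      rw [intervalIntegral.integral_congr (g := fun t => -(k^2 * (v t)^2) - (φ t)^2 * (v t)^2)
          (fun t _ => hpt t),
        intervalIntegral.integral_sub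
          (Continuous.intervalIntegrable (by fun_prop) _ _ :
            IntervalIntegrable (fun t => -(k^2 * (v t)^2)) volume a₁ b₁) hint3,
        intervalIntegral.integral_neg, intervalIntegral.integral_const_mul]
    have hnn : 0 ≤ ∫ t in a₁..b₁, (deriv v t - φ t * v t)^2 :=
      intervalIntegral.integral_nonneg hab₁ (fun t _ => sq_nonneg _)
    rw [hexp, hibp, hsplit] at hnn
    rw [hIv, hId]
    linarith

/-- The half-strip with a corner `Ω_θ`. -/
def OmegaT (θ : ℝ) : Set (ℝ × ℝ) :=
  {p | 0 < p.2 ∧ p.2 < π ∧ -p.2 * Real.cot θ < p.1}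

/-- The triangle `T_θ = {(s,t) ∈ Ω_θ : s < -ρ₀(t)/2}` with `ρ₀(t) = (t/2) cot θ`. -/
def TriT (θ : ℝ) : Set (ℝ × ℝ) :=
  {p ∈ OmegaT θ | p.1 < -(p.2 / 2 * Real.cot θ) / 2}

set_option maxHeartbeats 1000000

/-- Local Hardy inequality for the transverse part of the energy. -/
theorem local_transverse_hardy (θ : ℝ) (hθ : θ ∈ Set.Ioo 0 (π / 2)) :
    ∀ u : ℝ × ℝ → ℂ,
      ContDiff ℝ (⊤ : ℕ∞) u → HasCompactSupport u → tsupport u ⊆ OmegaT θ →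
      (∫ p in OmegaT θ, ‖fderiv ℝ u p (0, 1)‖ ^ 2)
        - (∫ p in OmegaT θ, ‖u p‖ ^ 2)
      ≥ ∫ p in TriT θ, (π ^ 2 / (π - p.2 / 4) ^ 2 - 1) * ‖u p‖ ^ 2 := by
  obtain ⟨hθ1, hθ2⟩ := hθ
  have hsinθ : 0 < Real.sin θ := Real.sin_pos_of_pos_of_lt_pi hθ1 (by linarith [Real.pi_pos])
  have hcosθ : 0 < Real.cos θ := Real.cos_pos_of_mem_Ioo ⟨by linarith [Real.pi_pos], hθ2⟩
  have htanθ : 0 < Real.tan θ := Real.tan_pos_of_pos_of_lt_pi_div_two hθ1 hθ2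
  have hiff : ∀ s t : ℝ, -t * Real.cot θ < s ↔ -s * Real.tan θ < t := by
    intro s t
    rw [Real.cot_eq_cos_div_sin, Real.tan_eq_sin_div_cos,
      show -t * (Real.cos θ / Real.sin θ) = (-t * Real.cos θ)/Real.sin θ by ring,
      show -s * (Real.sin θ / Real.cos θ) = (-s * Real.sin θ)/Real.cos θ by ring,
      div_lt_iff₀ hsinθ, div_lt_iff₀ hcosθ]
    constructor <;> intro h <;> nlinarith
  have hmemΩ : ∀ s t : ℝ, ((s,t) ∈ OmegaT θ) ↔ t ∈ Set.Ioo (max 0 (-s * Real.tan θ)) π := by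
    intro s t
    simp only [OmegaT, Set.mem_setOf_eq, Set.mem_Ioo, max_lt_iff, hiff]
    tauto
  have hΩopen : IsOpen (OmegaT θ) := by
    have : OmegaT θ = {p : ℝ×ℝ | 0 < p.2} ∩ ({p | p.2 < π} ∩ {p | -p.2 * Real.cot θ < p.1}) := by
      ext p; simp [OmegaT, Set.mem_setOf_eq, and_assoc]
    rw [this]
    exact (isOpen_lt continuous_const continuous_snd).inter
      ((isOpen_lt continuous_snd continuous_const).inter
        (isOpen_lt (by fun_prop) continuous_fst))
  have hTopen : IsOpen (TriT θ) := by
    have : TriT θ = OmegaT θ ∩ {p : ℝ×ℝ | p.1 < -(p.2 / 2 * Real.cot θ) / 2} := rfl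
    rw [this]
    exact hΩopen.inter (isOpen_lt continuous_fst (by fun_prop))
  intro u hu hcs hsupp
  set D : ℝ × ℝ → ℝ := fun p => ‖fderiv ℝ u p (0, 1)‖ ^ 2 with hD
  set N : ℝ × ℝ → ℝ := fun p => ‖u p‖ ^ 2 with hN
  set G : ℝ × ℝ → ℝ := fun p => (π ^ 2 / (π - p.2 / 4) ^ 2 - 1) * ‖u p‖ ^ 2 with hG
  set R : ℝ × ℝ → ℝ := (TriT θ).indicator G with hR
  have hKu : IsCompact (tsupport u) := hcs
  have hfderivC : Continuous (fun p => fderiv ℝ u p) := hu.continuous_fderiv (by simp)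
  have hDc : Continuous D := (hfderivC.clm_apply continuous_const).norm.pow 2
  have hNc : Continuous N := hu.continuous.norm.pow 2
  have hDcs : HasCompactSupport D :=
    (hcs.fderiv ℝ).comp_left (g := fun L : (ℝ×ℝ) →L[ℝ] ℂ => ‖L (0,1)‖^2) (by simp)
  have hNcs : HasCompactSupport N := hcs.comp_left (g := fun z : ℂ => ‖z‖^2) (by simp)
  have hDint : Integrable D := hDc.integrable_of_hasCompactSupport hDcs
  have hNint : Integrable N := hNc.integrable_of_hasCompactSupport hNcs
  have hDzero : ∀ p ∉ OmegaT θ, D p = 0 := by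
    intro p hp
    have hpn : p ∉ tsupport u := fun h => hp (hsupp h)
    have h0 : fderiv ℝ u p = 0 := by
      by_contra h
      exact hpn (support_fderiv_subset ℝ (Function.mem_support.2 h))
    simp [hD, h0]
  have hNzero : ∀ p ∉ OmegaT θ, N p = 0 := by
    intro p hp
    have h0 : u p = 0 := image_eq_zero_of_notMem_tsupport (fun h => hp (hsupp h))
    simp [hN, h0]
  have hGm : Measurable G := by
    apply Measurable.mul
    · exact (measurable_const.div ((measurable_const.sub
        (measurable_snd.div measurable_const)).pow measurable_const)).sub measurable_const
    · exact (hu.continuous.norm.pow 2).measurable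
  have hRsm : StronglyMeasurable R :=
    (hGm.indicator hTopen.measurableSet).stronglyMeasurable
  have key : ∀ t : ℝ, 0 < t → t < π →
      0 ≤ π^2/(π - t/4)^2 - 1 ∧ π^2/(π - t/4)^2 - 1 ≤ 7/9 := by
    intro t ht0 htπ
    have hpos : 0 < π - t/4 := by linarith [Real.pi_pos]
    constructor
    · have h1 : 1 ≤ π^2/(π - t/4)^2 := by
        rw [le_div_iff₀ (by positivity)]; nlinarith
      linarith
    · have h2 : π^2/(π - t/4)^2 ≤ 16/9 := by
        rw [div_le_iff₀ (by positivity)]; nlinarith [Real.pi_pos]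
      linarith
  have hRnn : ∀ p, 0 ≤ R p := by
    intro p
    rw [hR]
    by_cases hp : p ∈ TriT θ
    · rw [Set.indicator_of_mem hp, hG]
      obtain ⟨⟨h1, h2, _⟩, _⟩ := hp
      exact mul_nonneg (key p.2 h1 h2).1 (by positivity)
    · rw [Set.indicator_of_notMem hp]
  have hRle : ∀ p, R p ≤ 7/9 * N p := by
    intro p
    rw [hR]
    by_cases hp : p ∈ TriT θ
    · rw [Set.indicator_of_mem hp, hG, hN]
      exact mul_le_mul_of_nonneg_right (by
        obtain ⟨⟨h1, h2, _⟩, _⟩ := hp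
        exact (key p.2 h1 h2).2) (by positivity)
    · rw [Set.indicator_of_notMem hp]
      have : 0 ≤ N p := by rw [hN]; positivity
      linarith
  have hRint : Integrable R := by
    apply Integrable.mono' (hNint.const_mul (7/9)) hRsm.aestronglyMeasurable
    refine Filter.Eventually.of_forall fun p => ?_
    rw [Real.norm_eq_abs, abs_of_nonneg (hRnn p)]
    exact hRle p
  rw [ge_iff_le,
    show (∫ p in TriT θ, G p) = ∫ p, R p from by
      rw [hR]; exact (MeasureTheory.integral_indicator hTopen.measurableSet).symm,
    setIntegral_eq_integral_of_forall_compl_eq_zero hDzero,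
    setIntegral_eq_integral_of_forall_compl_eq_zero hNzero]
  have hvol : (volume : Measure (ℝ×ℝ)) = (volume : Measure ℝ).prod volume :=
    Measure.volume_eq_prod ℝ ℝ
  have hDint' : Integrable D ((volume : Measure ℝ).prod volume) := by rwa [← hvol]
  have hNint' : Integrable N ((volume : Measure ℝ).prod volume) := by rwa [← hvol]
  have hRint' : Integrable R ((volume : Measure ℝ).prod volume) := by rwa [← hvol]
  have hDeq : (∫ p, D p) = ∫ s, ∫ t, D (s,t) := by
    rw [hvol]; exact integral_prod _ hDint'
  have hNeq : (∫ p, N p) = ∫ s, ∫ t, N (s,t) := by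
    rw [hvol]; exact integral_prod _ hNint'
  have hReq : (∫ p, R p) = ∫ s, ∫ t, R (s,t) := by
    rw [hvol]; exact integral_prod _ hRint'
  have hD1 : Integrable (fun s => ∫ t, D (s,t)) := hDint'.integral_prod_left
  have hN1 : Integrable (fun s => ∫ t, N (s,t)) := hNint'.integral_prod_left
  have hR1 : Integrable (fun s => ∫ t, R (s,t)) := hRint'.integral_prod_left
  rw [hDeq, hNeq, hReq, ← integral_sub hD1 hN1]
  apply integral_mono hR1 (hD1.sub hN1)
  intro s
  show (∫ t, R (s,t)) ≤ (∫ t, D (s,t)) - ∫ t, N (s,t)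
  -- slice setup
  set A := max 0 (-s * Real.tan θ) with hAdef
  set Tset := {t : ℝ | (s,t) ∈ tsupport u} with hTsetdef
  have hTclosed : IsClosed Tset := (isClosed_tsupport u).preimage (Continuous.prodMk_right s)
  have hTsub : Tset ⊆ Set.Ioo A π := fun t ht => (hmemΩ s t).1 (hsupp ht)
  have hTcomp : IsCompact Tset :=
    (hKu.image continuous_snd).of_isClosed_subset hTclosed (fun t ht => ⟨(s,t), ht, rfl⟩)
  set v : ℝ → ℂ := fun t => u (s,t) with hv
  have hvsm : ContDiff ℝ (⊤ : ℕ∞) v := hu.comp (contDiff_const.prodMk contDiff_id)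
  have hvder : ∀ t, HasDerivAt v (fderiv ℝ u (s,t) (0,1)) t := by
    intro t
    have h1 : HasDerivAt (fun t : ℝ => ((s,t) : ℝ×ℝ)) (((0:ℝ),(1:ℝ)) : ℝ×ℝ) t :=
      (hasDerivAt_const t s).prodMk (hasDerivAt_id t)
    have h2 := (hu.differentiable (by simp) (s,t)).hasFDerivAt
    exact h2.comp_hasDerivAt t h1
  set x : ℝ → ℝ := fun t => (v t).re with hxdef
  set y : ℝ → ℝ := fun t => (v t).im with hydef
  have hxsm : ContDiff ℝ (⊤ : ℕ∞) x := Complex.reCLM.contDiff.comp hvsm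
  have hysm : ContDiff ℝ (⊤ : ℕ∞) y := Complex.imCLM.contDiff.comp hvsm
  have hxder : ∀ t, HasDerivAt x ((fderiv ℝ u (s,t) (0,1)).re) t := fun t => by
    exact Complex.reCLM.hasFDerivAt.comp_hasDerivAt t (hvder t)
  have hyder : ∀ t, HasDerivAt y ((fderiv ℝ u (s,t) (0,1)).im) t := fun t => by
    exact Complex.imCLM.hasFDerivAt.comp_hasDerivAt t (hvder t)
  have hxz : ∀ t ∉ Tset, x t = 0 := fun t ht => by
    have : u (s,t) = 0 := image_eq_zero_of_notMem_tsupport ht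
    simp [hxdef, hv, this]
  have hyz : ∀ t ∉ Tset, y t = 0 := fun t ht => by
    have : u (s,t) = 0 := image_eq_zero_of_notMem_tsupport ht
    simp [hydef, hv, this]
  have hxcs : HasCompactSupport x := HasCompactSupport.intro hTcomp hxz
  have hycs : HasCompactSupport y := HasCompactSupport.intro hTcomp hyz
  have hxsupp : tsupport x ⊆ Tset :=
    closure_minimal (fun t ht => by_contra fun h => ht (hxz t h)) hTclosed
  have hysupp : tsupport y ⊆ Tset :=
    closure_minimal (fun t ht => by_contra fun h => ht (hyz t h)) hTclosed
  have hnorm : ∀ z : ℂ, ‖z‖^2 = z.re^2 + z.im^2 := fun z => by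
    rw [Complex.sq_norm, Complex.normSq_apply]; ring
  have hDpt : ∀ t, D (s,t) = (deriv x t)^2 + (deriv y t)^2 := by
    intro t
    rw [(hxder t).deriv, (hyder t).deriv, hD]
    exact hnorm _
  have hNpt : ∀ t, N (s,t) = (x t)^2 + (y t)^2 := by
    intro t
    rw [hN, hxdef, hydef, hv]
    exact hnorm _
  -- slice integrabilities
  have hix2 : Integrable (fun t => (x t)^2) :=
    (hxsm.continuous.fun_pow 2).integrable_of_hasCompactSupport
      (hxcs.comp_left (g := fun r : ℝ => r^2) (by simp))
  have hiy2 : Integrable (fun t => (y t)^2) :=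
    (hysm.continuous.fun_pow 2).integrable_of_hasCompactSupport
      (hycs.comp_left (g := fun r : ℝ => r^2) (by simp))
  have hidx2 : Integrable (fun t => (deriv x t)^2) :=
    ((hxsm.continuous_deriv (by simp)).fun_pow 2).integrable_of_hasCompactSupport
      (hxcs.deriv.comp_left (g := fun r : ℝ => r^2) (by simp))
  have hidy2 : Integrable (fun t => (deriv y t)^2) :=
    ((hysm.continuous_deriv (by simp)).fun_pow 2).integrable_of_hasCompactSupport
      (hycs.deriv.comp_left (g := fun r : ℝ => r^2) (by simp))
  have hNint_s : Integrable (fun t => N (s,t)) :=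
    (hix2.add hiy2).congr (Filter.Eventually.of_forall fun t => (hNpt t).symm)
  have hDint_s : Integrable (fun t => D (s,t)) :=
    (hidx2.add hidy2).congr (Filter.Eventually.of_forall fun t => (hDpt t).symm)
  have hRint_s : Integrable (fun t => R (s,t)) := by
    apply Integrable.mono' (hNint_s.const_mul (7/9))
    · exact (hRsm.comp_measurable measurable_prodMk_left).aestronglyMeasurable
    · refine Filter.Eventually.of_forall fun t => ?_
      rw [Real.norm_eq_abs, abs_of_nonneg (hRnn (s,t))]
      exact hRle (s,t)
  by_cases hAπ : π ≤ A
  · -- empty slice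
    have hallzero : ∀ t : ℝ, (s,t) ∉ tsupport u := by
      intro t ht
      have h2 := hTsub ht
      have := h2.1; have := h2.2
      linarith
    have hD0 : ∀ t : ℝ, D (s,t) = 0 := by
      intro t
      have h0 : fderiv ℝ u (s,t) = 0 := by
        by_contra h
        exact hallzero t (support_fderiv_subset ℝ (Function.mem_support.2 h))
      simp [hD, h0]
    have hN0 : ∀ t : ℝ, N (s,t) = 0 := fun t => by
      simp [hN, image_eq_zero_of_notMem_tsupport (hallzero t)]
    have hR0 : ∀ t : ℝ, R (s,t) = 0 := fun t => by
      rw [hR]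
      by_cases hp : (s,t) ∈ TriT θ
      · rw [Set.indicator_of_mem hp, hG]
        simp [image_eq_zero_of_notMem_tsupport (hallzero t)]
      · rw [Set.indicator_of_notMem hp]
    simp only [hD0, hN0, hR0, MeasureTheory.integral_zero]
    norm_num
  · push_neg at hAπ
    have hx1D := oneD x hxsm hxcs A π hAπ (subset_trans hxsupp hTsub)
    have hy1D := oneD y hysm hycs A π hAπ (subset_trans hysupp hTsub)
    set C := (π/(π - A))^2 with hCdef
    have hA0 : 0 ≤ A := le_max_left 0 _
    have hπA : 0 < π - A := by linarith
    have hCeq : C = π^2/(π - A)^2 := by rw [hCdef, div_pow]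
    have hC1 : 1 ≤ C := by
      rw [hCeq, le_div_iff₀ (by positivity)]
      nlinarith [Real.pi_pos]
    have hslice1 : C * ∫ t, N (s,t) ≤ ∫ t, D (s,t) := by
      have e1 : (∫ t, N (s,t)) = (∫ t, (x t)^2) + ∫ t, (y t)^2 := by
        simp only [hNpt]; exact integral_add hix2 hiy2
      have e2 : (∫ t, D (s,t)) = (∫ t, (deriv x t)^2) + ∫ t, (deriv y t)^2 := by
        simp only [hDpt]; exact integral_add hidx2 hidy2
      rw [e1, e2, hCdef]
      have hxn : 0 ≤ ∫ t, (x t)^2 := integral_nonneg fun t => sq_nonneg _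
      have hyn : 0 ≤ ∫ t, (y t)^2 := integral_nonneg fun t => sq_nonneg _
      nlinarith [hx1D, hy1D]
    have hRpt : ∀ t, R (s,t) ≤ (C - 1) * N (s,t) := by
      intro t
      by_cases hp : (s,t) ∈ TriT θ
      · rw [hR, Set.indicator_of_mem hp, hG]
        obtain ⟨⟨ht0, htπ, hts⟩, hps⟩ := hp
        have ht4 : t/4 < -s * Real.tan θ := by
          rw [Real.cot_eq_cos_div_sin] at hps
          rw [Real.tan_eq_sin_div_cos,
            show -s * (Real.sin θ / Real.cos θ) = (-s * Real.sin θ)/Real.cos θ by ring,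
            lt_div_iff₀ hcosθ]
          have hps' : s < -(t * Real.cos θ)/(4 * Real.sin θ) := by
            have heq : -(t/2 * (Real.cos θ/Real.sin θ))/2
                = -(t * Real.cos θ)/(4 * Real.sin θ) := by
              field_simp
              ring
            rwa [heq] at hps
          rw [lt_div_iff₀ (by positivity)] at hps'
          nlinarith
        have ht4A : t/4 ≤ A := le_trans ht4.le (le_max_right 0 _)
        have hFle : π^2/(π - t/4)^2 - 1 ≤ C - 1 := by
          have hmono : π^2/(π - t/4)^2 ≤ π^2/(π - A)^2 := by
            apply div_le_div_of_nonneg_left (by positivity) (by positivity) (by nlinarith)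
          rw [hCeq]
          linarith
        have : N (s,t) = ‖u (s,t)‖^2 := by rw [hN]
        rw [this]
        exact mul_le_mul_of_nonneg_right hFle (by positivity)
      · rw [hR, Set.indicator_of_notMem hp]
        have : 0 ≤ N (s,t) := by rw [hN]; positivity
        nlinarith
    have h2 : (∫ t, R (s,t)) ≤ (C - 1) * ∫ t, N (s,t) := by
      rw [← MeasureTheory.integral_const_mul]
      exact integral_mono hRint_s (hNint_s.const_mul _) hRpt
    linarith
end
end

section
/- Let c > 0. For every g ∈ C_0^∞((−c, +∞); ℂ) one has ∫_{−c}^{+∞} ( |g'(s)|² − |g(s)|²/(4(s+2c)²) ) ds ≥ (1/4) ∫_{−c}^{+∞} |g(s)|² / ( (s+2c)² ln²((s+2c)/c) ) ds. (One-dimensional Hardy inequality with logarithmic weight; here c plays the role of ρ₀(t) > 0 and s + 2c the role of ρ.) -/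
open Real MeasureTheory Set Function

noncomputable section

def auxV (c : ℝ) : ℝ → ℝ :=
  fun s => (2*(s+2*c))⁻¹ + (2*(s+2*c)*Real.log ((s+2*c)/c))⁻¹

def auxdV (c : ℝ) : ℝ → ℝ :=
  fun s => -(1/(2*(s+2*c)^2))
    - (2*Real.log ((s+2*c)/c)+2)/(4*(s+2*c)^2*(Real.log ((s+2*c)/c))^2)

def auxφ (g : ℝ → ℂ) : ℝ → ℝ := fun s => Complex.normSq (g s)

def auxdφ (g : ℝ → ℂ) : ℝ → ℝ := fun s => 2*(deriv g s * (starRingEnd ℂ) (g s)).re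

def auxE (c : ℝ) (g : ℝ → ℂ) : ℝ → ℝ :=
  fun s => auxdV c s * auxφ g s + auxV c s * auxdφ g s

def auxf4 (c : ℝ) (g : ℝ → ℂ) : ℝ → ℝ :=
  fun s => ‖deriv g s - ((auxV c s : ℝ) : ℂ) * g s‖^2

lemma aux_integrableOn_of_support (F : ℝ → ℝ) (a b t : ℝ)
    (hsub : Set.Icc a b ⊆ Set.Ioi t)
    (hF : ContinuousOn F (Set.Icc a b)) (h0 : ∀ x, x ∉ Set.Icc a b → F x = 0) :
    IntegrableOn F (Set.Ioi t) := by
  have h1 : IntegrableOn F (Set.Icc a b) := hF.integrableOn_compact isCompact_Icc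
  have h2 : Set.indicator (Set.Ioi t) F = Set.indicator (Set.Icc a b) F := by
    funext x
    by_cases hx : x ∈ Set.Icc a b
    · rw [Set.indicator_of_mem hx, Set.indicator_of_mem (hsub hx)]
    · rw [Set.indicator_of_notMem hx]
      by_cases hx' : x ∈ Set.Ioi t
      · rw [Set.indicator_of_mem hx', h0 x hx]
      · rw [Set.indicator_of_notMem hx']
  have h3 := (integrable_indicator_iff (measurableSet_Icc (a := a) (b := b))).2 h1
  rw [← h2] at h3
  exact (integrable_indicator_iff measurableSet_Ioi).1 h3

lemma auxV_hasDerivAt (c x : ℝ) (hc : 0 < c) (hx : -c < x) :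
    HasDerivAt (auxV c) (auxdV c x) x := by
  unfold auxV auxdV
  have hρ : 0 < x + 2*c := by linarith
  have hL : 0 < Real.log ((x+2*c)/c) := Real.log_pos (by rw [lt_div_iff₀ hc]; linarith)
  have hid : HasDerivAt (fun s : ℝ => s + 2*c) 1 x := (hasDerivAt_id x).add_const _
  have h2ρ : HasDerivAt (fun s : ℝ => 2*(s+2*c)) 2 x := by simpa using hid.const_mul 2
  have hinv1 := h2ρ.inv (ne_of_gt (by linarith : (0:ℝ) < 2*(x+2*c)))
  have hdiv : HasDerivAt (fun s : ℝ => (s+2*c)/c) (1/c) x := by simpa using hid.div_const c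
  have hlog := hdiv.log (ne_of_gt (div_pos hρ hc))
  have hmul := h2ρ.mul hlog
  have hinv2 := hmul.inv (ne_of_gt (by positivity : (0:ℝ) < 2*(x+2*c)*Real.log ((x+2*c)/c)))
  have h := hinv1.add hinv2
  refine h.congr_deriv ?_
  have h1 : (x + 2*c) ≠ 0 := ne_of_gt hρ
  have h2 : Real.log ((x+2*c)/c) ≠ 0 := ne_of_gt hL
  have hc0 : c ≠ 0 := ne_of_gt hc
  simp only [Pi.mul_apply]
  field_simp
  ring

lemma auxφ_hasDerivAt (g : ℝ → ℂ) (hg : Differentiable ℝ g) (x : ℝ) :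
    HasDerivAt (auxφ g) (auxdφ g x) x := by
  unfold auxφ auxdφ
  have hgx : HasDerivAt g (deriv g x) x := (hg x).hasDerivAt
  have hre : HasDerivAt (fun s => (g s).re) ((deriv g x).re) x :=
    Complex.reCLM.hasFDerivAt.comp_hasDerivAt x hgx
  have him : HasDerivAt (fun s => (g s).im) ((deriv g x).im) x :=
    Complex.imCLM.hasFDerivAt.comp_hasDerivAt x hgx
  have h := (hre.mul hre).add (him.mul him)
  have heq : (2 : ℝ) * (deriv g x * (starRingEnd ℂ) (g x)).re
      = (deriv g x).re * (g x).re + (g x).re * (deriv g x).re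
        + ((deriv g x).im * (g x).im + (g x).im * (deriv g x).im) := by
    simp [Complex.mul_re]; ring
  rw [heq]
  simp only [Complex.normSq_apply]
  exact h

lemma aux_pointwise (c x : ℝ) (hc : 0 < c) (hx : -c < x) (z w : ℂ) :
    ‖w‖^2 - ‖z‖^2/(4*(x+2*c)^2)
      - 1/4*(‖z‖^2/((x+2*c)^2*(Real.log ((x+2*c)/c))^2))
    = ‖w - ((((2*(x+2*c))⁻¹ + (2*(x+2*c)*Real.log ((x+2*c)/c))⁻¹ : ℝ)) : ℂ)*z‖^2
      + ((-(1/(2*(x+2*c)^2)) - (2*Real.log ((x+2*c)/c)+2)/(4*(x+2*c)^2*(Real.log ((x+2*c)/c))^2))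
          * Complex.normSq z
        + ((2*(x+2*c))⁻¹ + (2*(x+2*c)*Real.log ((x+2*c)/c))⁻¹)
          * (2*(w * (starRingEnd ℂ) z).re)) := by
  have hρ : 0 < x + 2*c := by linarith
  have hL : 0 < Real.log ((x+2*c)/c) := Real.log_pos (by rw [lt_div_iff₀ hc]; linarith)
  have h1 : (x + 2*c) ≠ 0 := ne_of_gt hρ
  have h2 : Real.log ((x+2*c)/c) ≠ 0 := ne_of_gt hL
  have hn : ∀ u : ℂ, ‖u‖^2 = Complex.normSq u := fun u => by
    rw [Complex.sq_norm]
  rw [hn, hn, hn, Complex.normSq_sub, Complex.normSq_mul, Complex.normSq_ofReal]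
  have h3 : (w * (starRingEnd ℂ) ((((2*(x+2*c))⁻¹ + (2*(x+2*c)*Real.log ((x+2*c)/c))⁻¹ : ℝ) : ℂ) * z)).re
      = ((2*(x+2*c))⁻¹ + (2*(x+2*c)*Real.log ((x+2*c)/c))⁻¹) * (w * (starRingEnd ℂ) z).re := by
    rw [map_mul, Complex.conj_ofReal, ← mul_assoc, mul_comm w, mul_assoc,
      Complex.mul_re, Complex.ofReal_re, Complex.ofReal_im]
    ring
  rw [h3]
  field_simp
  ring

lemma aux_key (c x : ℝ) (g : ℝ → ℂ) (hc : 0 < c) (hx : -c < x) :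
    ‖deriv g x‖^2 - ‖g x‖^2/(4*(x+2*c)^2)
      - 1/4*(‖g x‖^2/((x+2*c)^2*(Real.log ((x+2*c)/c))^2))
    = auxf4 c g x + auxE c g x := by
  unfold auxf4 auxE auxV auxdV auxφ auxdφ
  exact aux_pointwise c x hc hx (g x) (deriv g x)

lemma auxdV_continuousAt (c x : ℝ) (hc : 0 < c) (hx : -c < x) :
    ContinuousAt (auxdV c) x := by
  unfold auxdV
  have hρ : 0 < x + 2*c := by linarith
  have hL : 0 < Real.log ((x+2*c)/c) := Real.log_pos (by rw [lt_div_iff₀ hc]; linarith)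
  have cdiv : ContinuousAt (fun s : ℝ => (s+2*c)/c) x :=
    (continuousAt_id.add continuousAt_const).div_const c
  have c1 : ContinuousAt (fun s : ℝ => Real.log ((s+2*c)/c)) x :=
    cdiv.log (ne_of_gt (div_pos hρ hc))
  apply ContinuousAt.sub
  · apply ContinuousAt.neg
    apply ContinuousAt.div (by fun_prop) (by fun_prop)
    have := pow_pos hρ 2; nlinarith
  · apply ContinuousAt.div
    · exact (c1.const_mul 2).add continuousAt_const
    · exact (by fun_prop : ContinuousAt (fun s : ℝ => 4*(s+2*c)^2) x).mul (c1.pow 2)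
    · have h1 := pow_pos hρ 2
      have h2 := pow_pos hL 2
      positivity

/-- One-dimensional Hardy inequality with logarithmic weight: here `c > 0`
plays the role of `ρ₀(t)` and `s + 2c` the role of `ρ`. -/
theorem one_dim_log_hardy (c : ℝ) (hc : 0 < c) :
    ∀ g : ℝ → ℂ,
      ContDiff ℝ (⊤ : ℕ∞) g → HasCompactSupport g → tsupport g ⊆ Set.Ioi (-c) →
      ∫ s in Set.Ioi (-c), (‖deriv g s‖ ^ 2 - ‖g s‖ ^ 2 / (4 * (s + 2 * c) ^ 2))
      ≥ 1 / 4 * ∫ s in Set.Ioi (-c),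
          ‖g s‖ ^ 2 / ((s + 2 * c) ^ 2 * (Real.log ((s + 2 * c) / c)) ^ 2) := by
  intro g hg hKcs hsub
  have hgd : Differentiable ℝ g := hg.differentiable (by simp)
  have hgc : Continuous g := hgd.continuous
  have hdgc : Continuous (deriv g) := hg.continuous_deriv (by simp)
  obtain ⟨a, b, ha, hab, hKab⟩ : ∃ a b : ℝ, -c < a ∧ a ≤ b ∧ tsupport g ⊆ Set.Icc a b := by
    by_cases hne : (tsupport g).Nonempty
    · refine ⟨sInf (tsupport g), sSup (tsupport g), ?_, ?_, ?_⟩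
      · exact hsub (IsCompact.sInf_mem hKcs hne)
      · exact csInf_le_csSup hne hKcs.bddBelow hKcs.bddAbove
      · exact fun x hx => ⟨csInf_le hKcs.bddBelow hx, le_csSup hKcs.bddAbove hx⟩
    · refine ⟨-c+1, -c+1, by linarith, le_refl _, ?_⟩
      rw [Set.not_nonempty_iff_eq_empty] at hne
      rw [hne]; exact Set.empty_subset _
  have hsubIcc : Set.Icc a b ⊆ Set.Ioi (-c) := fun x hx => lt_of_lt_of_le ha hx.1
  have hg0 : ∀ x, x ∉ Set.Icc a b → g x = 0 := fun x hx =>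
    image_eq_zero_of_notMem_tsupport (fun h => hx (hKab h))
  have hdg0 : ∀ x, x ∉ Set.Icc a b → deriv g x = 0 := by
    intro x hx
    by_contra h
    exact hx (hKab (support_deriv_subset (Function.mem_support.mpr h)))
  have hVca : ∀ x, -c < x → ContinuousAt (auxV c) x := fun x hx =>
    (auxV_hasDerivAt c x hc hx).continuousAt
  have hφc : Continuous (auxφ g) := Complex.continuous_normSq.comp hgc
  have hdφc : Continuous (auxdφ g) := by
    unfold auxdφ
    exact continuous_const.mul (Complex.continuous_re.comp (hdgc.mul (Complex.continuous_conj.comp hgc)))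
  have hρpos : ∀ x : ℝ, -c < x → 0 < x + 2*c := fun x hx => by linarith
  have hLpos : ∀ x : ℝ, -c < x → 0 < Real.log ((x+2*c)/c) := fun x hx =>
    Real.log_pos (by rw [lt_div_iff₀ hc]; linarith)
  -- integrability facts
  have i1 : IntegrableOn (fun s => ‖deriv g s‖ ^ 2 - ‖g s‖ ^ 2 / (4 * (s + 2 * c) ^ 2))
      (Set.Ioi (-c)) := by
    apply aux_integrableOn_of_support _ a b _ hsubIcc
    · apply ContinuousOn.sub ((hdgc.norm.pow 2)).continuousOn
      apply ContinuousOn.div ((hgc.norm.pow 2)).continuousOn (by fun_prop)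
      intro x hx
      have := hρpos x (hsubIcc hx)
      positivity
    · intro x hx; rw [hg0 x hx, hdg0 x hx]; simp
  have i3 : IntegrableOn
      (fun s => ‖g s‖ ^ 2 / ((s + 2 * c) ^ 2 * (Real.log ((s + 2 * c) / c)) ^ 2))
      (Set.Ioi (-c)) := by
    apply aux_integrableOn_of_support _ a b _ hsubIcc
    · apply ContinuousOn.div ((hgc.norm.pow 2)).continuousOn
      · intro x hx
        have hx' := hsubIcc hx
        have hL := hLpos x hx'
        apply ContinuousAt.continuousWithinAt
        exact (((continuousAt_id.add continuousAt_const).pow 2).mul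
          ((((continuousAt_id.add continuousAt_const).div_const c).log
            (ne_of_gt (div_pos (hρpos x hx') hc))).pow 2))
      · intro x hx
        have h1 := hρpos x (hsubIcc hx)
        have h2 := hLpos x (hsubIcc hx)
        positivity
    · intro x hx; rw [hg0 x hx]; simp
  have i4 : IntegrableOn (auxf4 c g) (Set.Ioi (-c)) := by
    apply aux_integrableOn_of_support _ a b _ hsubIcc
    · intro x hx
      apply ContinuousAt.continuousWithinAt
      unfold auxf4
      exact ((hdgc.continuousAt.sub
        ((Complex.continuous_ofReal.continuousAt.comp (hVca x (hsubIcc hx))).mul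
          hgc.continuousAt)).norm.pow 2)
    · intro x hx; unfold auxf4; rw [hg0 x hx, hdg0 x hx]; simp
  have hE0 : ∀ x, x ∉ Set.Icc a b → auxE c g x = 0 := by
    intro x hx
    unfold auxE auxφ auxdφ
    rw [hg0 x hx]; simp
  have iE : IntegrableOn (auxE c g) (Set.Ioi (-c)) := by
    apply aux_integrableOn_of_support _ a b _ hsubIcc
    · intro x hx
      apply ContinuousAt.continuousWithinAt
      unfold auxE
      exact ((auxdV_continuousAt c x hc (hsubIcc hx)).mul hφc.continuousAt).add
        ((hVca x (hsubIcc hx)).mul hdφc.continuousAt)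
    · exact hE0
  -- the integral of auxE vanishes
  set a2 : ℝ := (-c + a)/2 with ha2def
  set b2 : ℝ := b + 1 with hb2def
  have ha2 : -c < a2 := by rw [ha2def]; linarith
  have ha2a : a2 < a := by rw [ha2def]; linarith
  have hb2 : b < b2 := by rw [hb2def]; linarith
  have ha2b2 : a2 ≤ b2 := by linarith
  have hIoa : Set.uIcc a2 b2 ⊆ Set.Ioi (-c) := by
    rw [Set.uIcc_of_le ha2b2]
    exact fun x hx => lt_of_lt_of_le ha2 hx.1
  have hWd : ∀ x ∈ Set.uIcc a2 b2,
      HasDerivAt (fun s => auxV c s * auxφ g s) (auxE c g x) x := fun x hx =>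
    (auxV_hasDerivAt c x hc (hIoa hx)).mul (auxφ_hasDerivAt g hgd x)
  have hEint : IntervalIntegrable (auxE c g) volume a2 b2 := by
    apply ContinuousOn.intervalIntegrable
    intro x hx
    apply ContinuousAt.continuousWithinAt
    unfold auxE
    exact ((auxdV_continuousAt c x hc (hIoa hx)).mul hφc.continuousAt).add
      ((hVca x (hIoa hx)).mul hdφc.continuousAt)
  have hstep3 := intervalIntegral.integral_eq_sub_of_hasDerivAt hWd hEint
  have hφ0 : ∀ x, x ∉ Set.Icc a b → auxφ g x = 0 := by
    intro x hx; unfold auxφ; rw [hg0 x hx]; simp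
  have hφa2 : auxφ g a2 = 0 := hφ0 _ (fun h => absurd h.1 (not_le.mpr ha2a))
  have hφb2 : auxφ g b2 = 0 := hφ0 _ (fun h => absurd h.2 (not_le.mpr hb2))
  have hintE : ∫ x in Set.Ioi (-c), auxE c g x = 0 := by
    rw [setIntegral_eq_integral_of_forall_compl_eq_zero
      (fun x hx => hE0 x (fun hm => hx (hsubIcc hm)))]
    rw [← intervalIntegral.integral_eq_integral_of_support_subset
      (f := auxE c g) (a := a2) (b := b2) ?_]
    · rw [hstep3, hφa2, hφb2]; ring
    · intro x hx
      have hxm : x ∈ Set.Icc a b := by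
        by_contra hxc
        exact hx (hE0 x hxc)
      exact ⟨lt_of_lt_of_le ha2a hxm.1, le_trans hxm.2 (le_of_lt hb2)⟩
  -- pointwise identity and conclusion
  have hcong : ∫ x in Set.Ioi (-c),
        ((‖deriv g x‖ ^ 2 - ‖g x‖ ^ 2 / (4 * (x + 2 * c) ^ 2))
          - 1/4 * (‖g x‖ ^ 2 / ((x + 2 * c) ^ 2 * (Real.log ((x + 2 * c) / c)) ^ 2)))
      = ∫ x in Set.Ioi (-c), (auxf4 c g x + auxE c g x) := by
    apply setIntegral_congr_fun measurableSet_Ioi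
    intro x hx
    have := aux_key c x g hc hx
    linarith
  have hsplit : ∫ x in Set.Ioi (-c),
        ((‖deriv g x‖ ^ 2 - ‖g x‖ ^ 2 / (4 * (x + 2 * c) ^ 2))
          - 1/4 * (‖g x‖ ^ 2 / ((x + 2 * c) ^ 2 * (Real.log ((x + 2 * c) / c)) ^ 2)))
      = (∫ x in Set.Ioi (-c), (‖deriv g x‖ ^ 2 - ‖g x‖ ^ 2 / (4 * (x + 2 * c) ^ 2)))
        - 1/4 * ∫ x in Set.Ioi (-c),
            ‖g x‖ ^ 2 / ((x + 2 * c) ^ 2 * (Real.log ((x + 2 * c) / c)) ^ 2) := by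
    rw [integral_sub i1 (i3.const_mul (1/4)), MeasureTheory.integral_const_mul]
  have hadd : ∫ x in Set.Ioi (-c), (auxf4 c g x + auxE c g x)
      = (∫ x in Set.Ioi (-c), auxf4 c g x) + ∫ x in Set.Ioi (-c), auxE c g x :=
    integral_add i4 iE
  have hpos : 0 ≤ ∫ x in Set.Ioi (-c), auxf4 c g x :=
    setIntegral_nonneg measurableSet_Ioi (fun x _ => by unfold auxf4; positivity)
  rw [ge_iff_le]
  linarith [hcong, hsplit, hadd, hpos, hintE]
end
end

section
/- Let θ ∈ (0, π/2). There exists ε₀ > 0 such that for all ε ∈ (0, ε₀) and all t ∈ (0, π) one has π²/(π − t/4)² − 1 − 16 tan²θ · ε t − (ε/8) t³ ≥ 0. -/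
open Real

/-- Positivity of `f(t) - 16 tan²θ · ε t - (ε/8) t³` on `(0,π)` for all
sufficiently small `ε > 0`, where `f(t) = π²/(π - t/4)² - 1`. -/
theorem positivity_of_remainder (θ : ℝ) (hθ : θ ∈ Set.Ioo 0 (π / 2)) :
    ∃ ε₀ > 0, ∀ ε ∈ Set.Ioo (0 : ℝ) ε₀, ∀ t ∈ Set.Ioo (0 : ℝ) π,
      π ^ 2 / (π - t / 4) ^ 2 - 1 - 16 * Real.tan θ ^ 2 * ε * t - ε / 8 * t ^ 3
        ≥ 0 := by
  have hπ := Real.pi_pos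
  have htan : 0 < Real.tan θ := Real.tan_pos_of_pos_of_lt_pi_div_two hθ.1 hθ.2
  set C : ℝ := 16 * Real.tan θ ^ 2 + π ^ 2 / 8 with hC
  have hCpos : 0 < C := by positivity
  refine ⟨1 / (4 * π * C), by positivity, ?_⟩
  rintro ε ⟨hε0, hε1⟩ t ⟨ht0, ht1⟩
  have hd : 0 < π - t / 4 := by linarith
  -- lower bound for f
  have h1 : t / (4 * π) + 1 ≤ π ^ 2 / (π - t / 4) ^ 2 := by
    rw [le_div_iff₀ (by positivity)]
    have key : (t + 4 * π) * (π - t / 4) ^ 2 ≤ 4 * π * π ^ 2 := by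
      nlinarith [mul_pos ht0 hπ, mul_nonneg ht0.le ht0.le, sq_nonneg (π - t)]
    have heq : t / (4 * π) + 1 = (t + 4 * π) / (4 * π) := by field_simp
    rw [heq, div_mul_eq_mul_div, div_le_iff₀ (by positivity)]
    nlinarith [key]
  have ht2 : t ^ 2 ≤ π ^ 2 := by nlinarith
  have h2 : 16 * Real.tan θ ^ 2 * ε * t + ε / 8 * t ^ 3 ≤ ε * C * t := by
    have h3 : ε / 8 * t ^ 3 ≤ ε * (π ^ 2 / 8) * t := by
      have := mul_le_mul_of_nonneg_left ht2 (by positivity : (0:ℝ) ≤ ε * t / 8)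
      nlinarith [this]
    rw [hC]; nlinarith [h3]
  have h4 : ε * C * t < t / (4 * π) := by
    have h5 : ε * C * t < 1 / (4 * π * C) * C * t := by
      have := mul_lt_mul_of_pos_right (mul_lt_mul_of_pos_right hε1 hCpos) ht0
      linarith
    have h6 : 1 / (4 * π * C) * C * t = t / (4 * π) := by
      field_simp
    linarith [h5, h6.symm.le, h6.le]
  linarith [h1, h2, h4]
end

section
/- Let θ ∈ (0, π/2) and ω ∈ (0, 1/2]. For every u ∈ C_0^∞(Gui(θ); ℂ) one has 4ω² ‖u‖²_{H¹(Gui(θ))} ≤ ∫_{Gui(θ)} (|∂_r u|² + |∂_z u|² + (ω² − 1/4) r^{−2} |u|²) dr dz + ∫_{Gui(θ)} |u|² dr dz ≤ ‖u‖²_{H¹(Gui(θ))}, where ‖u‖²_{H¹(Gui(θ))} = ∫_{Gui(θ)} (|u|² + |∂_r u|² + |∂_z u|²) dr dz. (Norm equivalence for the axisymmetric fiber m = 0.) -/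
set_option maxHeartbeats 1000000


open Real MeasureTheory

noncomputable section

/-- Integrability of a continuous function vanishing off a compact set. -/
lemma myIntegrable {h : ℝ × ℝ → ℝ} (hc : Continuous h) {K : Set (ℝ × ℝ)} (hK : IsCompact K)
    (hs : ∀ p ∉ K, h p = 0) : Integrable h :=
  hc.integrable_of_hasCompactSupport (HasCompactSupport.intro hK hs)

/-- Continuity of `g / r^n` when `g` vanishes near `{r ≤ 0}`. -/
lemma contdiv {g : ℝ × ℝ → ℝ} {δ : ℝ} (hδ : 0 < δ) (hg : Continuous g)
    (hvan : ∀ p : ℝ × ℝ, p.1 < δ → g p = 0) (n : ℕ) :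
    Continuous fun p : ℝ × ℝ => g p / p.1 ^ n := by
  rw [continuous_iff_continuousAt]
  intro p
  rcases lt_or_ge p.1 δ with hp | hp
  · have hopen : IsOpen {q : ℝ × ℝ | q.1 < δ} := isOpen_lt continuous_fst continuous_const
    have hev : (fun q : ℝ × ℝ => g q / q.1 ^ n) =ᶠ[nhds p] fun _ => (0 : ℝ) := by
      filter_upwards [hopen.mem_nhds hp] with q hq
      simp [hvan q hq]
    exact ContinuousAt.congr continuousAt_const hev.symm
  · have h1 : p.1 ≠ 0 := (hδ.trans_le hp).ne'
    exact (hg.continuousAt).div (by fun_prop) (pow_ne_zero _ h1)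

/-- Hardy inequality in the first variable for smooth compactly supported functions
vanishing near `{r ≤ 0}`. -/
lemma hardy {f : ℝ × ℝ → ℝ} (hf : ContDiff ℝ (⊤ : ℕ∞) f) (hK : HasCompactSupport f)
    {δ : ℝ} (hδ : 0 < δ) (hvan : ∀ p : ℝ × ℝ, p.1 < δ → f p = 0) :
    (∫ p : ℝ × ℝ, f p ^ 2 / p.1 ^ 2) ≤ 4 * ∫ p : ℝ × ℝ, fderiv ℝ f p (1, 0) ^ 2 := by
  have hKc : IsCompact (tsupport f) := hK
  set g : ℝ × ℝ → ℝ := fun p => fderiv ℝ f p (1, 0) with hg_def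
  have hopen : IsOpen {q : ℝ × ℝ | q.1 < δ} := isOpen_lt continuous_fst continuous_const
  have hfc : Continuous f := hf.continuous
  have hgc : Continuous g := (hf.continuous_fderiv (by simp)).clm_apply continuous_const
  have hgvan : ∀ p : ℝ × ℝ, p.1 < δ → g p = 0 := by
    intro p hp
    have hev : f =ᶠ[nhds p] fun _ => (0 : ℝ) := by
      filter_upwards [hopen.mem_nhds hp] with q hq using hvan q hq
    simp [hg_def, hev.fderiv_eq]
  have hsf : ∀ p ∉ tsupport f, f p = 0 := fun p hp => image_eq_zero_of_notMem_tsupport hp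
  have hsg : ∀ p ∉ tsupport f, g p = 0 := by
    intro p hp
    have : fderiv ℝ f p = 0 :=
      Function.notMem_support.mp fun hmem => hp (support_fderiv_subset ℝ hmem)
    simp [hg_def, this]
  -- the auxiliary function for integration by parts
  set F : ℝ × ℝ → ℝ := fun q => f q * f q * (2 * q.1)⁻¹ with hF_def
  have hFvan : ∀ p : ℝ × ℝ, p.1 < δ → F p = 0 := fun p hp => by simp [hF_def, hvan p hp]
  have hFC : ContDiff ℝ (⊤ : ℕ∞) F := by
    rw [contDiff_iff_contDiffAt]
    intro p
    rcases lt_or_ge p.1 δ with hp | hp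
    · have hev : F =ᶠ[nhds p] fun _ => (0 : ℝ) := by
        filter_upwards [hopen.mem_nhds hp] with q hq using hFvan q hq
      exact (contDiffAt_const (c := (0 : ℝ))).congr_of_eventuallyEq hev
    · have h1 : (2 : ℝ) * p.1 ≠ 0 := mul_ne_zero two_ne_zero ((hδ.trans_le hp).ne')
      exact (hf.contDiffAt.mul hf.contDiffAt).mul
        (((contDiffAt_const (c := (2:ℝ))).mul contDiffAt_fst).inv h1)
  have hFsupp : HasCompactSupport F :=
    HasCompactSupport.intro hKc fun p hp => by simp [hF_def, hsf p hp]
  -- derivative identity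
  have hder : ∀ p : ℝ × ℝ, fderiv ℝ F p (1, 0)
      = f p * g p / p.1 - (f p * f p / p.1 ^ 2) / 2 := by
    intro p
    rcases lt_or_ge p.1 δ with hp | hp
    · have hev : F =ᶠ[nhds p] fun _ => (0 : ℝ) := by
        filter_upwards [hopen.mem_nhds hp] with q hq using hFvan q hq
      rw [hev.fderiv_eq]
      simp [hvan p hp]
    · have hp0 : p.1 ≠ 0 := (hδ.trans_le hp).ne'
      have h1 : (2 : ℝ) * p.1 ≠ 0 := mul_ne_zero two_ne_zero hp0
      have hd : HasFDerivAt f (fderiv ℝ f p) p :=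
        (hf.differentiable (by simp) p).hasFDerivAt
      have hm : HasFDerivAt (fun q : ℝ × ℝ => 2 * q.1)
          ((2 : ℝ) • ContinuousLinearMap.fst ℝ ℝ ℝ) p :=
        (hasFDerivAt_fst (p := p)).const_mul 2
      have hinv : HasFDerivAt (fun q : ℝ × ℝ => (2 * q.1)⁻¹)
          ((ContinuousLinearMap.smulRight (1 : ℝ →L[ℝ] ℝ) (-((2 * p.1) ^ 2)⁻¹)).comp
            ((2 : ℝ) • ContinuousLinearMap.fst ℝ ℝ ℝ)) p :=
        (hasFDerivAt_inv h1).comp p hm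
      have hn : HasFDerivAt (fun q => f q * f q)
          (f p • fderiv ℝ f p + f p • fderiv ℝ f p) p := hd.mul hd
      have hFd := hn.mul hinv
      rw [(show HasFDerivAt F _ p from hFd).fderiv]
      simp only [ContinuousLinearMap.add_apply, ContinuousLinearMap.smul_apply,
        ContinuousLinearMap.comp_apply, ContinuousLinearMap.smulRight_apply,
        ContinuousLinearMap.one_apply, ContinuousLinearMap.coe_fst', smul_eq_mul, ← hg_def]
      norm_num
      field_simp
      ring
  -- integrability
  have i1 : Integrable fun p : ℝ × ℝ => f p * g p / p.1 := by
    have hc : Continuous fun p : ℝ × ℝ => (f p * g p) / p.1 ^ 1 :=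
      contdiv hδ (hfc.mul hgc) (fun p hp => by simp [hvan p hp]) 1
    simp only [pow_one] at hc
    exact myIntegrable hc hKc fun p hp => by simp [hsf p hp]
  have i2 : Integrable fun p : ℝ × ℝ => f p * f p / p.1 ^ 2 := by
    have hc := contdiv hδ (hfc.mul hfc) (fun p hp => by simp [hvan p hp]) 2
    exact myIntegrable hc hKc fun p hp => by simp [hsf p hp]
  have iB : Integrable fun p : ℝ × ℝ => g p ^ 2 :=
    myIntegrable (hgc.pow 2) hKc fun p hp => by simp [hsg p hp]
  have iFd : Integrable fun p : ℝ × ℝ => fderiv ℝ F p (1, 0) := by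
    refine ((i1.sub (i2.div_const 2)).congr ?_)
    exact ae_of_all _ fun p => (hder p).symm
  have iF : Integrable F := hFC.continuous.integrable_of_hasCompactSupport hFsupp
  -- integration by parts: the integral of the derivative vanishes
  have hzero : (∫ p : ℝ × ℝ, fderiv ℝ F p (1, 0)) = 0 := by
    have h := integral_mul_fderiv_eq_neg_fderiv_mul_of_integrable
      (f := fun _ : ℝ × ℝ => (1 : ℝ)) (g := F) (v := ((1 : ℝ), (0 : ℝ)))
      (μ := volume) ?_ ?_ ?_ ?_ ?_
    · simpa [fderiv_const] using h
    · refine (integrable_zero _ _ _).congr (ae_of_all _ fun p => ?_)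
      simp [fderiv_const]
    · simpa using iFd
    · simpa using iF
    · exact fun x _ => differentiableAt_const _
    · exact fun x _ => hFC.differentiable (by simp) x
  have hIeq : (∫ p : ℝ × ℝ, f p * g p / p.1)
      = (∫ p : ℝ × ℝ, f p * f p / p.1 ^ 2) / 2 := by
    have : (∫ p : ℝ × ℝ, (f p * g p / p.1 - (f p * f p / p.1 ^ 2) / 2)) = 0 := by
      rw [← hzero]
      exact integral_congr_ae (ae_of_all _ fun p => (hder p).symm)
    have hs1 : (∫ p : ℝ × ℝ, (f p * g p / p.1 - f p * f p / p.1 ^ 2 / 2))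
        = (∫ p : ℝ × ℝ, f p * g p / p.1)
          - ∫ p : ℝ × ℝ, f p * f p / p.1 ^ 2 / 2 := integral_sub i1 (i2.div_const 2)
    have hs2 : (∫ p : ℝ × ℝ, f p * f p / p.1 ^ 2 / 2)
        = (∫ p : ℝ × ℝ, f p * f p / p.1 ^ 2) / 2 := integral_div _ _
    rw [hs1, hs2] at this
    linarith
  -- the square trick
  have hpos : 0 ≤ ∫ p : ℝ × ℝ, (g p - f p / (2 * p.1)) ^ 2 :=
    integral_nonneg fun p => sq_nonneg _
  have hexp : (fun p : ℝ × ℝ => (g p - f p / (2 * p.1)) ^ 2)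
      = fun p : ℝ × ℝ => g p ^ 2 - f p * g p / p.1 + (f p * f p / p.1 ^ 2) / 4 := by
    funext p; ring
  have hstep1 : (∫ p : ℝ × ℝ, (g p ^ 2 - f p * g p / p.1 + f p * f p / p.1 ^ 2 / 4))
      = (∫ p : ℝ × ℝ, (g p ^ 2 - f p * g p / p.1))
        + ∫ p : ℝ × ℝ, f p * f p / p.1 ^ 2 / 4 :=
    integral_add (f := fun p => g p ^ 2 - f p * g p / p.1)
      (g := fun p => f p * f p / p.1 ^ 2 / 4) (iB.sub i1) (i2.div_const 4)
  have hstep2 : (∫ p : ℝ × ℝ, (g p ^ 2 - f p * g p / p.1))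
      = (∫ p : ℝ × ℝ, g p ^ 2) - ∫ p : ℝ × ℝ, f p * g p / p.1 := integral_sub iB i1
  have hstep3 : (∫ p : ℝ × ℝ, f p * f p / p.1 ^ 2 / 4)
      = (∫ p : ℝ × ℝ, f p * f p / p.1 ^ 2) / 4 := integral_div _ _
  rw [hexp, hstep1, hstep2, hstep3] at hpos
  have hff : (∫ p : ℝ × ℝ, f p ^ 2 / p.1 ^ 2) = ∫ p : ℝ × ℝ, f p * f p / p.1 ^ 2 :=
    integral_congr_ae (ae_of_all _ fun p => by ring_nf)
  rw [hff]
  linarith [hpos, hIeq]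

/-- Norm equivalence for the axisymmetric fiber `m = 0`:
`4ω² ‖u‖²_{H¹} ≤ q_{ω,θ}^{[0]}[u] + ‖u‖²_{L²} ≤ ‖u‖²_{H¹}`. -/
theorem norm_equivalence_axisymmetric (θ ω : ℝ)
    (hθ : θ ∈ Set.Ioo 0 (π / 2)) (hω : ω ∈ Set.Ioc 0 (1 / 2)) :
    ∀ u : ℝ × ℝ → ℂ,
      ContDiff ℝ (⊤ : ℕ∞) u → HasCompactSupport u → tsupport u ⊆ Gui θ →
      4 * ω ^ 2 * (∫ p in Gui θ, (‖u p‖ ^ 2 + ‖fderiv ℝ u p (1, 0)‖ ^ 2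
          + ‖fderiv ℝ u p (0, 1)‖ ^ 2))
        ≤ (∫ p in Gui θ, (‖fderiv ℝ u p (1, 0)‖ ^ 2 + ‖fderiv ℝ u p (0, 1)‖ ^ 2
            + (ω ^ 2 - 1 / 4) / p.1 ^ 2 * ‖u p‖ ^ 2))
          + (∫ p in Gui θ, ‖u p‖ ^ 2) ∧
      (∫ p in Gui θ, (‖fderiv ℝ u p (1, 0)‖ ^ 2 + ‖fderiv ℝ u p (0, 1)‖ ^ 2
            + (ω ^ 2 - 1 / 4) / p.1 ^ 2 * ‖u p‖ ^ 2))
          + (∫ p in Gui θ, ‖u p‖ ^ 2)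
        ≤ ∫ p in Gui θ, (‖u p‖ ^ 2 + ‖fderiv ℝ u p (1, 0)‖ ^ 2
            + ‖fderiv ℝ u p (0, 1)‖ ^ 2) := by
  obtain ⟨hω1, hω2⟩ := hω
  intro u hu hcs hsub
  have hKc : IsCompact (tsupport u) := hcs
  -- a positive lower bound for the first coordinate on the support
  obtain ⟨δ, hδ, hvanu⟩ : ∃ δ : ℝ, 0 < δ ∧ ∀ p : ℝ × ℝ, p.1 < δ → u p = 0 := by
    rcases (tsupport u).eq_empty_or_nonempty with h | h
    · exact ⟨1, one_pos, fun p _ => image_eq_zero_of_notMem_tsupport (by simp [h])⟩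
    · obtain ⟨p₀, hp₀K, hp₀min⟩ :=
        hKc.exists_isMinOn h (continuous_fst.continuousOn)
      refine ⟨p₀.1, (hsub hp₀K).1, fun p hp =>
        image_eq_zero_of_notMem_tsupport fun hpK => ?_⟩
      exact absurd (isMinOn_iff.mp hp₀min p hpK) (not_le.mpr hp)
  have hsu : ∀ p ∉ tsupport u, u p = 0 := fun p hp => image_eq_zero_of_notMem_tsupport hp
  have hsd : ∀ p ∉ tsupport u, fderiv ℝ u p = 0 := fun p hp =>
    Function.notMem_support.mp fun hmem => hp (support_fderiv_subset ℝ hmem)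
  -- real and imaginary parts
  set a : ℝ × ℝ → ℝ := fun p => (u p).re with ha_def
  set b : ℝ × ℝ → ℝ := fun p => (u p).im with hb_def
  have hae : a = ⇑Complex.reCLM ∘ u := by funext p; simp [ha_def]
  have hbe : b = ⇑Complex.imCLM ∘ u := by funext p; simp [hb_def]
  have haC : ContDiff ℝ (⊤ : ℕ∞) a := by rw [hae]; exact Complex.reCLM.contDiff.comp hu
  have hbC : ContDiff ℝ (⊤ : ℕ∞) b := by rw [hbe]; exact Complex.imCLM.contDiff.comp hu
  have hfa : ∀ (p : ℝ × ℝ) (v : ℝ × ℝ), fderiv ℝ a p v = (fderiv ℝ u p v).re := by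
    intro p v
    have h1 : fderiv ℝ (⇑Complex.reCLM ∘ u) p
        = Complex.reCLM.comp (fderiv ℝ u p) :=
      (Complex.reCLM.hasFDerivAt.comp p (hu.differentiable (by simp) p).hasFDerivAt).fderiv
    rw [hae, h1]; simp
  have hfb : ∀ (p : ℝ × ℝ) (v : ℝ × ℝ), fderiv ℝ b p v = (fderiv ℝ u p v).im := by
    intro p v
    have h1 : fderiv ℝ (⇑Complex.imCLM ∘ u) p
        = Complex.imCLM.comp (fderiv ℝ u p) :=
      (Complex.imCLM.hasFDerivAt.comp p (hu.differentiable (by simp) p).hasFDerivAt).fderiv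
    rw [hbe, h1]; simp
  have hnorm : ∀ z : ℂ, ‖z‖ ^ 2 = z.re ^ 2 + z.im ^ 2 := fun z => by
    rw [Complex.sq_norm, Complex.normSq_apply]; ring
  -- Hardy inequality for components
  have hHa := hardy haC (HasCompactSupport.intro hKc fun p hp => by simp [ha_def, hsu p hp])
    hδ (fun p hp => by simp [ha_def, hvanu p hp])
  have hHb := hardy hbC (HasCompactSupport.intro hKc fun p hp => by simp [hb_def, hsu p hp])
    hδ (fun p hp => by simp [hb_def, hvanu p hp])
  -- continuity facts
  have hCu : Continuous u := hu.continuous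
  have hCfd : Continuous fun p : ℝ × ℝ => fderiv ℝ u p := hu.continuous_fderiv (by simp)
  -- integrability facts
  have iP : Integrable fun p : ℝ × ℝ => ‖u p‖ ^ 2 :=
    myIntegrable (hCu.norm.pow 2) hKc fun p hp => by simp [hsu p hp]
  have iQ1 : Integrable fun p : ℝ × ℝ => ‖fderiv ℝ u p (1, 0)‖ ^ 2 :=
    myIntegrable (((hCfd.clm_apply continuous_const).norm).pow 2) hKc
      fun p hp => by simp [hsd p hp]
  have iQ2 : Integrable fun p : ℝ × ℝ => ‖fderiv ℝ u p (0, 1)‖ ^ 2 :=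
    myIntegrable (((hCfd.clm_apply continuous_const).norm).pow 2) hKc
      fun p hp => by simp [hsd p hp]
  have iC : Integrable fun p : ℝ × ℝ => ‖u p‖ ^ 2 / p.1 ^ 2 :=
    myIntegrable (contdiv hδ (hCu.norm.pow 2) (fun p hp => by simp [hvanu p hp]) 2)
      hKc fun p hp => by simp [hsu p hp]
  have ia2 : Integrable fun p : ℝ × ℝ => a p ^ 2 / p.1 ^ 2 :=
    myIntegrable (contdiv hδ ((haC.continuous).pow 2)
      (fun p hp => by simp [ha_def, hvanu p hp]) 2) hKc
      fun p hp => by simp [ha_def, hsu p hp]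
  have ib2 : Integrable fun p : ℝ × ℝ => b p ^ 2 / p.1 ^ 2 :=
    myIntegrable (contdiv hδ ((hbC.continuous).pow 2)
      (fun p hp => by simp [hb_def, hvanu p hp]) 2) hKc
      fun p hp => by simp [hb_def, hsu p hp]
  have iDa : Integrable fun p : ℝ × ℝ => fderiv ℝ a p (1, 0) ^ 2 :=
    myIntegrable ((((haC.continuous_fderiv (by simp)).clm_apply continuous_const)).pow 2)
      hKc fun p hp => by rw [hfa p _, hsd p hp]; simp
  have iDb : Integrable fun p : ℝ × ℝ => fderiv ℝ b p (1, 0) ^ 2 :=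
    myIntegrable ((((hbC.continuous_fderiv (by simp)).clm_apply continuous_const)).pow 2)
      hKc fun p hp => by rw [hfb p _, hsd p hp]; simp
  have iR : Integrable fun p : ℝ × ℝ => (ω ^ 2 - 1 / 4) / p.1 ^ 2 * ‖u p‖ ^ 2 := by
    refine (iC.const_mul (ω ^ 2 - 1 / 4)).congr (ae_of_all _ fun p => ?_)
    ring
  -- splitting of the Hardy quantities
  have hsplitC : (∫ p : ℝ × ℝ, ‖u p‖ ^ 2 / p.1 ^ 2)
      = (∫ p : ℝ × ℝ, a p ^ 2 / p.1 ^ 2) + ∫ p : ℝ × ℝ, b p ^ 2 / p.1 ^ 2 := by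
    have h1 : (∫ p : ℝ × ℝ, (a p ^ 2 / p.1 ^ 2 + b p ^ 2 / p.1 ^ 2))
        = (∫ p : ℝ × ℝ, a p ^ 2 / p.1 ^ 2) + ∫ p : ℝ × ℝ, b p ^ 2 / p.1 ^ 2 :=
      integral_add (f := fun p : ℝ × ℝ => a p ^ 2 / p.1 ^ 2)
        (g := fun p : ℝ × ℝ => b p ^ 2 / p.1 ^ 2) ia2 ib2
    rw [← h1]
    exact integral_congr_ae (ae_of_all _ fun p => by
      simp only [hnorm (u p), add_div, ha_def, hb_def])
  have hsplitB1 : (∫ p : ℝ × ℝ, ‖fderiv ℝ u p (1, 0)‖ ^ 2)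
      = (∫ p : ℝ × ℝ, fderiv ℝ a p (1, 0) ^ 2) + ∫ p : ℝ × ℝ, fderiv ℝ b p (1, 0) ^ 2 := by
    have h1 : (∫ p : ℝ × ℝ, (fderiv ℝ a p (1, 0) ^ 2 + fderiv ℝ b p (1, 0) ^ 2))
        = (∫ p : ℝ × ℝ, fderiv ℝ a p (1, 0) ^ 2)
          + ∫ p : ℝ × ℝ, fderiv ℝ b p (1, 0) ^ 2 :=
      integral_add (f := fun p : ℝ × ℝ => fderiv ℝ a p (1, 0) ^ 2)
        (g := fun p : ℝ × ℝ => fderiv ℝ b p (1, 0) ^ 2) iDa iDb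
    rw [← h1]
    exact integral_congr_ae (ae_of_all _ fun p => by
      simp only [hnorm (fderiv ℝ u p (1, 0)), hfa, hfb])
  have hC4 : (∫ p : ℝ × ℝ, ‖u p‖ ^ 2 / p.1 ^ 2)
      ≤ 4 * ∫ p : ℝ × ℝ, ‖fderiv ℝ u p (1, 0)‖ ^ 2 := by
    rw [hsplitC, hsplitB1]; linarith
  -- set integrals equal full integrals
  have e1 : (∫ p in Gui θ, (‖fderiv ℝ u p (1, 0)‖ ^ 2 + ‖fderiv ℝ u p (0, 1)‖ ^ 2
        + (ω ^ 2 - 1 / 4) / p.1 ^ 2 * ‖u p‖ ^ 2))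
      = ∫ p : ℝ × ℝ, (‖fderiv ℝ u p (1, 0)‖ ^ 2 + ‖fderiv ℝ u p (0, 1)‖ ^ 2
        + (ω ^ 2 - 1 / 4) / p.1 ^ 2 * ‖u p‖ ^ 2) := by
    refine setIntegral_eq_integral_of_forall_compl_eq_zero fun p hp => ?_
    have hpK : p ∉ tsupport u := fun h => hp (hsub h)
    simp [hsu p hpK, hsd p hpK]
  have e2 : (∫ p in Gui θ, ‖u p‖ ^ 2) = ∫ p : ℝ × ℝ, ‖u p‖ ^ 2 := by
    refine setIntegral_eq_integral_of_forall_compl_eq_zero fun p hp => ?_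
    have hpK : p ∉ tsupport u := fun h => hp (hsub h)
    simp [hsu p hpK]
  have e3 : (∫ p in Gui θ, (‖u p‖ ^ 2 + ‖fderiv ℝ u p (1, 0)‖ ^ 2
        + ‖fderiv ℝ u p (0, 1)‖ ^ 2))
      = ∫ p : ℝ × ℝ, (‖u p‖ ^ 2 + ‖fderiv ℝ u p (1, 0)‖ ^ 2
        + ‖fderiv ℝ u p (0, 1)‖ ^ 2) := by
    refine setIntegral_eq_integral_of_forall_compl_eq_zero fun p hp => ?_
    have hpK : p ∉ tsupport u := fun h => hp (hsub h)
    simp [hsu p hpK, hsd p hpK]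
  -- splitting the full integrals
  have eR : (∫ p : ℝ × ℝ, (ω ^ 2 - 1 / 4) / p.1 ^ 2 * ‖u p‖ ^ 2)
      = (ω ^ 2 - 1 / 4) * ∫ p : ℝ × ℝ, ‖u p‖ ^ 2 / p.1 ^ 2 := by
    rw [← integral_const_mul]
    exact integral_congr_ae (ae_of_all _ fun p => by ring)
  have esum1 : (∫ p : ℝ × ℝ, (‖fderiv ℝ u p (1, 0)‖ ^ 2 + ‖fderiv ℝ u p (0, 1)‖ ^ 2
        + (ω ^ 2 - 1 / 4) / p.1 ^ 2 * ‖u p‖ ^ 2))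
      = (∫ p : ℝ × ℝ, ‖fderiv ℝ u p (1, 0)‖ ^ 2)
        + (∫ p : ℝ × ℝ, ‖fderiv ℝ u p (0, 1)‖ ^ 2)
        + (ω ^ 2 - 1 / 4) * ∫ p : ℝ × ℝ, ‖u p‖ ^ 2 / p.1 ^ 2 := by
    have h1 : (∫ p : ℝ × ℝ, ((‖fderiv ℝ u p (1, 0)‖ ^ 2 + ‖fderiv ℝ u p (0, 1)‖ ^ 2)
          + (ω ^ 2 - 1 / 4) / p.1 ^ 2 * ‖u p‖ ^ 2))
        = (∫ p : ℝ × ℝ, (‖fderiv ℝ u p (1, 0)‖ ^ 2 + ‖fderiv ℝ u p (0, 1)‖ ^ 2))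
          + ∫ p : ℝ × ℝ, (ω ^ 2 - 1 / 4) / p.1 ^ 2 * ‖u p‖ ^ 2 :=
      integral_add (f := fun p : ℝ × ℝ => ‖fderiv ℝ u p (1, 0)‖ ^ 2
          + ‖fderiv ℝ u p (0, 1)‖ ^ 2)
        (g := fun p : ℝ × ℝ => (ω ^ 2 - 1 / 4) / p.1 ^ 2 * ‖u p‖ ^ 2) (iQ1.add iQ2) iR
    have h2 : (∫ p : ℝ × ℝ, (‖fderiv ℝ u p (1, 0)‖ ^ 2 + ‖fderiv ℝ u p (0, 1)‖ ^ 2))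
        = (∫ p : ℝ × ℝ, ‖fderiv ℝ u p (1, 0)‖ ^ 2)
          + ∫ p : ℝ × ℝ, ‖fderiv ℝ u p (0, 1)‖ ^ 2 :=
      integral_add (f := fun p : ℝ × ℝ => ‖fderiv ℝ u p (1, 0)‖ ^ 2)
        (g := fun p : ℝ × ℝ => ‖fderiv ℝ u p (0, 1)‖ ^ 2) iQ1 iQ2
    rw [h1, h2, eR]
  have esum3 : (∫ p : ℝ × ℝ, (‖u p‖ ^ 2 + ‖fderiv ℝ u p (1, 0)‖ ^ 2
        + ‖fderiv ℝ u p (0, 1)‖ ^ 2))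
      = (∫ p : ℝ × ℝ, ‖u p‖ ^ 2) + (∫ p : ℝ × ℝ, ‖fderiv ℝ u p (1, 0)‖ ^ 2)
        + ∫ p : ℝ × ℝ, ‖fderiv ℝ u p (0, 1)‖ ^ 2 := by
    have h1 : (∫ p : ℝ × ℝ, ((‖u p‖ ^ 2 + ‖fderiv ℝ u p (1, 0)‖ ^ 2)
          + ‖fderiv ℝ u p (0, 1)‖ ^ 2))
        = (∫ p : ℝ × ℝ, (‖u p‖ ^ 2 + ‖fderiv ℝ u p (1, 0)‖ ^ 2))
          + ∫ p : ℝ × ℝ, ‖fderiv ℝ u p (0, 1)‖ ^ 2 :=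
      integral_add (f := fun p : ℝ × ℝ => ‖u p‖ ^ 2 + ‖fderiv ℝ u p (1, 0)‖ ^ 2)
        (g := fun p : ℝ × ℝ => ‖fderiv ℝ u p (0, 1)‖ ^ 2) (iP.add iQ1) iQ2
    have h2 : (∫ p : ℝ × ℝ, (‖u p‖ ^ 2 + ‖fderiv ℝ u p (1, 0)‖ ^ 2))
        = (∫ p : ℝ × ℝ, ‖u p‖ ^ 2) + ∫ p : ℝ × ℝ, ‖fderiv ℝ u p (1, 0)‖ ^ 2 :=
      integral_add (f := fun p : ℝ × ℝ => ‖u p‖ ^ 2)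
        (g := fun p : ℝ × ℝ => ‖fderiv ℝ u p (1, 0)‖ ^ 2) iP iQ1
    rw [h1, h2]
  -- nonnegativity
  have hA0 : 0 ≤ ∫ p : ℝ × ℝ, ‖u p‖ ^ 2 := integral_nonneg fun p => by positivity
  have hB10 : 0 ≤ ∫ p : ℝ × ℝ, ‖fderiv ℝ u p (1, 0)‖ ^ 2 :=
    integral_nonneg fun p => by positivity
  have hB20 : 0 ≤ ∫ p : ℝ × ℝ, ‖fderiv ℝ u p (0, 1)‖ ^ 2 :=
    integral_nonneg fun p => by positivity
  have hC0 : 0 ≤ ∫ p : ℝ × ℝ, ‖u p‖ ^ 2 / p.1 ^ 2 :=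
    integral_nonneg fun p => by positivity
  set A := ∫ p : ℝ × ℝ, ‖u p‖ ^ 2
  set B1 := ∫ p : ℝ × ℝ, ‖fderiv ℝ u p (1, 0)‖ ^ 2
  set B2 := ∫ p : ℝ × ℝ, ‖fderiv ℝ u p (0, 1)‖ ^ 2
  set C := ∫ p : ℝ × ℝ, ‖u p‖ ^ 2 / p.1 ^ 2
  have hω4 : ω ^ 2 ≤ 1 / 4 := by nlinarith
  have k1 : 4 * ω ^ 2 * A ≤ A := by
    nlinarith [mul_nonneg (by linarith : (0:ℝ) ≤ 1 - 4 * ω ^ 2) hA0]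
  have k2 : 4 * ω ^ 2 * B2 ≤ B2 := by
    nlinarith [mul_nonneg (by linarith : (0:ℝ) ≤ 1 - 4 * ω ^ 2) hB20]
  have k3 : (1 / 4 - ω ^ 2) * C ≤ (1 / 4 - ω ^ 2) * (4 * B1) :=
    mul_le_mul_of_nonneg_left hC4 (by linarith)
  have k4 : (ω ^ 2 - 1 / 4) * C ≤ 0 :=
    mul_nonpos_iff.mpr (Or.inr ⟨by linarith, hC0⟩)
  constructor
  · rw [e1, e2, e3, esum1, esum3]
    nlinarith [k1, k2, k3]
  · rw [e1, e2, e3, esum1, esum3]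
    nlinarith [k4]
end
end
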